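/- arXiv:2411.04957 — 5 statements merged into one kernel-verified Lean document; each statement's English description precedes it below -/
import Mathlib

section
/- In a finite connected graph G, suppose that for all vertices i, the KCN-neighborhood N_i^{ℓ₀} is a proper subgraph of G. Then there exists a vertex i₀ and a vertex b in N_{i₀}^{ℓ₀} and a vertex c in the neighborhood difference N_{b∖i₀}^{ℓ₀} such that, when running the tree-construction procedure seeded at i₀, the vertex c has a grandparent (the ancestor of its ancestor exists). Equivalently: it is impossible that for all vertices a, every vertex b ∈ N_a^{ℓ₀} satisfies N_{b∖a}^{ℓ₀} = {b}. -/
/-- The KCN `ℓ`-neighborhood of a vertex `i` (vertex part): `i`, its nearest neighbors,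
and all vertices on paths of length `≤ ℓ − 2` connecting two nearest neighbors of `i`. -/
def kcnVerts {V : Type} (G : SimpleGraph V) (ℓ : ℕ) (i : V) : Set V :=
  {i} ∪ G.neighborSet i ∪
    {v | ∃ a b, G.Adj i a ∧ G.Adj i b ∧ a ≠ b ∧
      ∃ p : G.Walk a b, p.IsPath ∧ p.length ≤ ℓ - 2 ∧ v ∈ p.support}

/-- The KCN `ℓ`-neighborhood of a vertex `i` (edge part): the edges incident to `i`,
and all edges on paths of length `≤ ℓ − 2` connecting two nearest neighbors of `i`. -/
def kcnEdges {V : Type} (G : SimpleGraph V) (ℓ : ℕ) (i : V) : Set (Sym2 V) :=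
  {e | ∃ a, G.Adj i a ∧ e = s(i, a)} ∪
    {e | ∃ a b, G.Adj i a ∧ G.Adj i b ∧ a ≠ b ∧
      ∃ p : G.Walk a b, p.IsPath ∧ p.length ≤ ℓ - 2 ∧ e ∈ p.edges}

lemma self_mem_kcnVerts {V : Type} (G : SimpleGraph V) (ℓ : ℕ) (i : V) :
    i ∈ kcnVerts G ℓ i := Or.inl (Or.inl rfl)

lemma incident_mem_kcnEdges {V : Type} {G : SimpleGraph V} (ℓ : ℕ) {i a : V}
    (h : G.Adj i a) : s(i, a) ∈ kcnEdges G ℓ i := Or.inl ⟨a, h, rfl⟩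

lemma kcnEdges_subset_edgeSet {V : Type} (G : SimpleGraph V) (ℓ : ℕ) (i : V) :
    kcnEdges G ℓ i ⊆ G.edgeSet := by
  rintro e (⟨a, ha, rfl⟩ | ⟨a, b, ha, hb, hab, p, hp, hlen, he⟩)
  · exact ha
  · exact p.edges_subset_edgeSet he

lemma endpoint_mem_kcnVerts {V : Type} {G : SimpleGraph V} {ℓ : ℕ} {i : V} {x y : V}
    (he : s(x, y) ∈ kcnEdges G ℓ i) : y ∈ kcnVerts G ℓ i := by
  rcases he with ⟨a, ha, hxy⟩ | ⟨a, b, ha, hb, hab, p, hp, hlen, he⟩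
  · rw [Sym2.eq_iff] at hxy
    rcases hxy with ⟨rfl, rfl⟩ | ⟨rfl, rfl⟩
    · exact Or.inl (Or.inr ha)
    · exact self_mem_kcnVerts G ℓ y
  · exact Or.inr ⟨a, b, ha, hb, hab, p, hp, hlen, p.snd_mem_support_of_mem_edges he⟩

/-- If every KCN-neighborhood is a proper subgraph of the finite connected graph `G`
(with at least two vertices), then it is impossible that for all vertices `a`, every
vertex `b ∈ N_a^{ℓ₀}` satisfies `N_{b∖a}^{ℓ₀} = {b}` (i.e. has no edges); equivalently,
some vertex in some neighborhood difference has a grandparent in the tree construction. -/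
theorem stmt_6 {V : Type} [Fintype V] (G : SimpleGraph V) (hconn : G.Connected)
    (hcard : 2 ≤ Fintype.card V) (ℓ₀ : ℕ)
    (hproper : ∀ i, ¬ (kcnVerts G ℓ₀ i = Set.univ ∧ kcnEdges G ℓ₀ i = G.edgeSet)) :
    ¬ (∀ a, ∀ b ∈ kcnVerts G ℓ₀ a, kcnEdges G ℓ₀ b \ kcnEdges G ℓ₀ a = ∅) := by
  intro H
  obtain ⟨a⟩ := hconn.nonempty
  set P : V → Prop := fun v => v ∈ kcnVerts G ℓ₀ a ∧ kcnEdges G ℓ₀ v ⊆ kcnEdges G ℓ₀ a with hP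
  have step : ∀ {w x : V}, P w → G.Adj w x → P x := by
    rintro w x ⟨hwv, hwe⟩ hadj
    have hx : x ∈ kcnVerts G ℓ₀ a :=
      endpoint_mem_kcnVerts (hwe (incident_mem_kcnEdges ℓ₀ hadj))
    refine ⟨hx, fun e he => ?_⟩
    by_contra hea
    exact Set.eq_empty_iff_forall_notMem.mp (H a x hx) e ⟨he, hea⟩
  have aux : ∀ {w v : V}, G.Walk w v → P w → P v := by
    intro w v p
    induction p with
    | nil => exact id
    | cons h q ih => exact fun hw => ih (step hw h)
  have key : ∀ v : V, P v := fun v =>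
    aux ((hconn a v).some) ⟨self_mem_kcnVerts G ℓ₀ a, fun e he => he⟩
  refine hproper a ⟨?_, ?_⟩
  · exact Set.eq_univ_iff_forall.mpr fun v => (key v).1
  · refine Set.Subset.antisymm (kcnEdges_subset_edgeSet G ℓ₀ a) fun e he => ?_
    induction e with
    | h x y => exact (key x).2 (incident_mem_kcnEdges ℓ₀ he)
end

section
/- For all ℓ ≥ 0 and every vertex x₀ of a finite connected graph G, the KCN-neighborhood N^K_ℓ(x₀) is contained in the WZPZ-neighborhood N^W_{ℓ−1}(x₀) (with the convention N^W_{−1} := N^W_0). -/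
/-- The boundary of a subgraph, given as a pair (vertex set, edge set): vertices of the
subgraph incident to an edge of `G` not in the subgraph. -/
def wBdry {V : Type} (G : SimpleGraph V) (P : Set V × Set (Sym2 V)) : Set V :=
  {v | v ∈ P.1 ∧ ∃ w, G.Adj v w ∧ s(v, w) ∉ P.2}

/-- One step of the WZPZ construction at level `s`: add all vertices and edges lying on
paths of length `≤ s`, with all edges outside the current subgraph, connecting two
boundary vertices of the current subgraph. -/
def wAdd {V : Type} (G : SimpleGraph V) (s : ℕ) (P : Set V × Set (Sym2 V)) :
    Set V × Set (Sym2 V) :=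
  (P.1 ∪ {v | ∃ a ∈ wBdry G P, ∃ b ∈ wBdry G P, ∃ p : G.Walk a b,
      p.IsPath ∧ p.length ≤ s ∧ (∀ e ∈ p.edges, e ∉ P.2) ∧ v ∈ p.support},
   P.2 ∪ {e | ∃ a ∈ wBdry G P, ∃ b ∈ wBdry G P, ∃ p : G.Walk a b,
      p.IsPath ∧ p.length ≤ s ∧ (∀ e' ∈ p.edges, e' ∉ P.2) ∧ e ∈ p.edges})

/-- Saturation at level `s`: iterate `wAdd` until nothing more can be added (on a finite
graph, iterating more times than there are vertices plus possible edges suffices). -/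
def wSat {V : Type} [Fintype V] (G : SimpleGraph V) (s : ℕ)
    (P : Set V × Set (Sym2 V)) : Set V × Set (Sym2 V) :=
  (wAdd G s)^[Fintype.card V * Fintype.card V + Fintype.card V + 1] P

/-- The number of saturation iterations actually needed at level `s` starting from `P`
(the least `k` after which `wAdd` is stationary). -/
noncomputable def wSatCount {V : Type} (G : SimpleGraph V) (s : ℕ)
    (P : Set V × Set (Sym2 V)) : ℕ :=
  sInf {k | (wAdd G s)^[k + 1] P = (wAdd G s)^[k] P}

/-- The starting subgraph of the WZPZ construction: `x₀`, its neighbors and the edges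
joining `x₀` to them. -/
def wzpzBase {V : Type} (G : SimpleGraph V) (x₀ : V) : Set V × Set (Sym2 V) :=
  ({x₀} ∪ G.neighborSet x₀, {e | ∃ a, G.Adj x₀ a ∧ e = s(x₀, a)})

/-- The WZPZ `ℓ`-neighborhood of `x₀`: starting from `x₀` with its incident edges and
neighbors, for each `s = 1, …, ℓ` in increasing order repeatedly add all vertices and
edges on outside paths of length `≤ s` between boundary vertices, until saturation. -/
def wzpz {V : Type} [Fintype V] (G : SimpleGraph V) (x₀ : V) : ℕ → Set V × Set (Sym2 V)
  | 0 => wzpzBase G x₀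
  | (s + 1) => wSat G (s + 1) (wzpz G x₀ s)

/-- Every cycle of `G` has length at most `ℓ₀`. -/
def cyclesBounded {V : Type} (G : SimpleGraph V) (ℓ₀ : ℕ) : Prop :=
  ∀ (v : V) (c : G.Walk v v), c.IsCycle → c.length ≤ ℓ₀


open SimpleGraph

namespace StmtAux

variable {V : Type}

/-- Subgraph invariant: every edge has both endpoints in the vertex set. -/
def Sub (P : Set V × Set (Sym2 V)) : Prop := ∀ e ∈ P.2, ∀ v ∈ e, v ∈ P.1

lemma le_wAdd (G : SimpleGraph V) (s : ℕ) (P : Set V × Set (Sym2 V)) :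
    P ≤ wAdd G s P :=
  ⟨Set.subset_union_left, Set.subset_union_left⟩

lemma le_iter (G : SimpleGraph V) (s : ℕ) (P : Set V × Set (Sym2 V)) (k : ℕ) :
    P ≤ (wAdd G s)^[k] P := by
  induction k with
  | zero => exact le_rfl
  | succ k ih =>
    rw [Function.iterate_succ_apply']
    exact le_trans ih (le_wAdd G s _)

lemma sub_wAdd (G : SimpleGraph V) (s : ℕ) (P : Set V × Set (Sym2 V)) (h : Sub P) :
    Sub (wAdd G s P) := by
  rintro e (he | ⟨a, ha, b, hb, p, hp, hlen, hout, hep⟩) v hv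
  · exact Or.inl (h e he v hv)
  · refine Or.inr ⟨a, ha, b, hb, p, hp, hlen, hout, ?_⟩
    induction e with
    | _ x y =>
      rcases Sym2.mem_iff.mp hv with rfl | rfl
      · exact p.fst_mem_support_of_mem_edges hep
      · exact p.snd_mem_support_of_mem_edges hep

lemma sub_iter (G : SimpleGraph V) (s : ℕ) (P : Set V × Set (Sym2 V)) (h : Sub P) (k : ℕ) :
    Sub ((wAdd G s)^[k] P) := by
  induction k with
  | zero => exact h
  | succ k ih =>
    rw [Function.iterate_succ_apply']
    exact sub_wAdd G s _ ih

lemma measure_lt [Fintype V] {P Q : Set V × Set (Sym2 V)} (hle : P ≤ Q) (hne : P ≠ Q) :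
    P.1.ncard + P.2.ncard < Q.1.ncard + Q.2.ncard := by
  by_cases h : P.1 = Q.1
  · have h2 : P.2 ⊂ Q.2 :=
      ⟨hle.2, fun hsup => hne (Prod.ext h (le_antisymm hle.2 hsup))⟩
    have l2 := Set.ncard_lt_ncard h2 (Set.toFinite _)
    have l1 : P.1.ncard = Q.1.ncard := by rw [h]
    omega
  · have h1 : P.1 ⊂ Q.1 := ⟨hle.1, fun hsup => h (le_antisymm hle.1 hsup)⟩
    have l1 := Set.ncard_lt_ncard h1 (Set.toFinite _)
    have l2 := Set.ncard_le_ncard hle.2 (Set.toFinite _)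
    omega

lemma measure_le [Fintype V] (P : Set V × Set (Sym2 V)) :
    P.1.ncard + P.2.ncard ≤ Fintype.card V + Fintype.card V * Fintype.card V := by
  have h1 : P.1.ncard ≤ Fintype.card V := by
    have := Set.ncard_le_ncard (Set.subset_univ P.1) (Set.toFinite _)
    rwa [Set.ncard_univ, Nat.card_eq_fintype_card] at this
  have h2 : P.2.ncard ≤ Fintype.card V * Fintype.card V := by
    have hs : Nat.card (Sym2 V) ≤ Fintype.card V * Fintype.card V := by
      have := Nat.card_le_card_of_surjective (Sym2.mk (α := V)).uncurry Sym2.mk_surjective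
      simpa [Nat.card_eq_fintype_card] using this
    have := Set.ncard_le_ncard (Set.subset_univ P.2) (Set.toFinite _)
    rw [Set.ncard_univ] at this
    omega
  omega

lemma wSat_fixed [Fintype V] (G : SimpleGraph V) (s : ℕ) (P : Set V × Set (Sym2 V)) :
    wAdd G s (wSat G s P) = wSat G s P := by
  set f := wAdd G s with hf
  set N := Fintype.card V * Fintype.card V + Fintype.card V + 1 with hN
  -- stationarity spreads
  have spread : ∀ k j, f^[k + 1] P = f^[k] P → k ≤ j → f^[j] P = f^[k] P := by
    intro k j hk hkj
    induction j with
    | zero =>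
      have : k = 0 := by omega
      subst this; rfl
    | succ j ih =>
      rcases Nat.lt_or_ge k (j + 1) with hlt | hge
      · have hj : k ≤ j := by omega
        rw [Function.iterate_succ_apply' f j P, ih hj,
          ← Function.iterate_succ_apply' f k P, hk]
      · have : k = j + 1 := by omega
        rw [this]
  by_contra hne
  have hstrict : ∀ k, k ≤ N → f^[k + 1] P ≠ f^[k] P := by
    intro k hk heq
    apply hne
    show f (f^[N] P) = f^[N] P
    rw [← Function.iterate_succ_apply' f N P]
    rw [spread k (N + 1) heq (by omega), spread k N heq hk]
  have grow : ∀ k, k ≤ N + 1 → k ≤ (f^[k] P).1.ncard + (f^[k] P).2.ncard := by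
    intro k hk
    induction k with
    | zero => omega
    | succ k ih =>
      have hle : f^[k] P ≤ f^[k + 1] P := by
        rw [Function.iterate_succ_apply']
        exact le_wAdd G s _
      have := measure_lt hle (Ne.symm (hstrict k (by omega)))
      have := ih (by omega)
      omega
  have := grow (N + 1) le_rfl
  have := measure_le (f^[N + 1] P)
  omega

lemma exists_first_edge {G : SimpleGraph V} {u v : V} (p : G.Walk u v) (h : p.length ≠ 0) :
    ∃ w, G.Adj u w ∧ s(u, w) ∈ p.edges := by
  cases p with
  | nil => simp at h
  | cons hadj q => exact ⟨_, hadj, by simp⟩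

/-- Core lemma: if `Q` is a fixed point of `wAdd G s` and a subgraph, then any path of
length `≤ s` between two vertices of `Q` is contained in `Q`. -/
lemma core (G : SimpleGraph V) (s : ℕ) (Q : Set V × Set (Sym2 V))
    (hfix : wAdd G s Q = Q) (hsub : Sub Q) :
    ∀ (n : ℕ) {a b : V} (p : G.Walk a b), p.length = n → p.IsPath → p.length ≤ s →
      a ∈ Q.1 → b ∈ Q.1 → (∀ v ∈ p.support, v ∈ Q.1) ∧ (∀ e ∈ p.edges, e ∈ Q.2) := by
  classical
  intro n
  induction n using Nat.strong_induction_on with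
  | _ n IH =>
    intro a b p hn hpath hlen ha hb
    by_cases hall : ∀ e ∈ p.edges, e ∉ Q.2
    · -- all edges outside: use the fixed point property
      cases p with
      | nil =>
        constructor
        · intro v hv; simp at hv; subst hv; exact ha
        · intro e he; simp at he
      | cons hadj q =>
        have hne0 : (Walk.cons hadj q).length ≠ 0 := by simp
        obtain ⟨w₁, hw₁, he₁⟩ := exists_first_edge (Walk.cons hadj q) hne0
        have hne0' : (Walk.cons hadj q).reverse.length ≠ 0 := by
          simp
        obtain ⟨w₂, hw₂, he₂⟩ := exists_first_edge (Walk.cons hadj q).reverse hne0'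
        rw [Walk.edges_reverse, List.mem_reverse] at he₂
        have hba : a ∈ wBdry G Q := ⟨ha, w₁, hw₁, hall _ he₁⟩
        have hbb : b ∈ wBdry G Q := ⟨hb, w₂, hw₂, hall _ he₂⟩
        constructor
        · intro v hv
          have : v ∈ (wAdd G s Q).1 :=
            Or.inr ⟨a, hba, b, hbb, Walk.cons hadj q, hpath, hlen, hall, hv⟩
          rwa [hfix] at this
        · intro e he
          have : e ∈ (wAdd G s Q).2 :=
            Or.inr ⟨a, hba, b, hbb, Walk.cons hadj q, hpath, hlen, hall, he⟩
          rwa [hfix] at this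
    · push_neg at hall
      obtain ⟨e, hep, heQ⟩ := hall
      cases p with
      | nil => simp at hep
      | cons hadj q =>
        rename_i c
        rw [Walk.cons_isPath_iff] at hpath
        obtain ⟨hqpath, hanotin⟩ := hpath
        by_cases hfirst : e = s(a, c)
        · -- the first edge is already in Q.2
          have hc : c ∈ Q.1 := hsub e heQ c (by rw [hfirst]; simp)
          have hlt : q.length < n := by
            rw [← hn]; simp [Walk.length_cons]
          have hq := IH q.length hlt q rfl hqpath
            (le_trans (Nat.le_succ _) hlen) hc hb
          constructor
          · intro v hv
            rw [Walk.support_cons, List.mem_cons] at hv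
            rcases hv with rfl | hv
            · exact ha
            · exact hq.1 v hv
          · intro e' he'
            rw [Walk.edges_cons, List.mem_cons] at he'
            rcases he' with rfl | he'
            · exact hfirst ▸ heQ
            · exact hq.2 e' he'
        · -- an interior edge is in Q.2 : split the path there
          have heq : e ∈ q.edges := by
            rw [Walk.edges_cons, List.mem_cons] at hep
            rcases hep with rfl | h
            · exact absurd rfl hfirst
            · exact h
          obtain ⟨⟨u, w⟩, rfl⟩ := Quot.exists_rep e
          have heq' : s(u, w) ∈ q.edges := heq
          have hu : u ∈ q.support := q.fst_mem_support_of_mem_edges heq'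
          have hw : w ∈ q.support := q.snd_mem_support_of_mem_edges heq'
          have huw : u ≠ w := (G.mem_edgeSet.mp (q.edges_subset_edgeSet heq')).ne
          set t : V := if u = b then w else u with htdef
          have htq : t ∈ q.support := by
            rw [htdef]; split <;> assumption
          have hta : t ≠ a := fun h => hanotin (h ▸ htq)
          have htb : t ≠ b := by
            rw [htdef]; split
            · rename_i h; exact fun hh => huw (h.trans hh.symm)
            · assumption
          have htQ : t ∈ Q.1 := by
            refine hsub _ heQ t ?_
            rw [htdef]; split
            · exact Sym2.mem_mk_right _ _
            · exact Sym2.mem_mk_left _ _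
          have ht : t ∈ (Walk.cons hadj q).support := by
            rw [Walk.support_cons]; exact List.mem_cons_of_mem _ htq
          set p₁ := (Walk.cons hadj q).takeUntil t ht with hp₁
          set p₂ := (Walk.cons hadj q).dropUntil t ht with hp₂
          have hspec : p₁.append p₂ = Walk.cons hadj q :=
            (Walk.cons hadj q).take_spec ht
          have hlensum : p₁.length + p₂.length = n := by
            have := congrArg Walk.length hspec
            rw [Walk.length_append] at this
            omega
          have h1 : p₁.length ≠ 0 := fun h0 => hta (Walk.eq_of_length_eq_zero h0).symm
          have h2 : p₂.length ≠ 0 := fun h0 => htb (Walk.eq_of_length_eq_zero h0)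
          have hpath' : (Walk.cons hadj q).IsPath := by
            rw [Walk.cons_isPath_iff]; exact ⟨hqpath, hanotin⟩
          have hP1 := IH p₁.length (by omega) p₁ rfl (hpath'.takeUntil ht)
            (le_trans (by omega) hlen) ha htQ
          have hP2 := IH p₂.length (by omega) p₂ rfl (hpath'.dropUntil ht)
            (le_trans (by omega) hlen) htQ hb
          constructor
          · intro v hv
            rw [← hspec, Walk.mem_support_append_iff] at hv
            rcases hv with hv | hv
            · exact hP1.1 v hv
            · exact hP2.1 v hv
          · intro e' he'
            rw [← hspec, Walk.edges_append, List.mem_append] at he'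
            rcases he' with he' | he'
            · exact hP1.2 e' he'
            · exact hP2.2 e' he'

lemma base_le [Fintype V] (G : SimpleGraph V) (x₀ : V) :
    ∀ m, wzpzBase G x₀ ≤ wzpz G x₀ m := by
  intro m
  induction m with
  | zero => exact le_rfl
  | succ m ih =>
    refine le_trans ih ?_
    show wzpz G x₀ m ≤ wSat G (m + 1) (wzpz G x₀ m)
    exact le_iter G (m + 1) (wzpz G x₀ m) _

lemma sub_base (G : SimpleGraph V) (x₀ : V) : Sub (wzpzBase G x₀) := by
  rintro e ⟨a, ha, rfl⟩ v hv
  rcases Sym2.mem_iff.mp hv with rfl | rfl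
  · exact Or.inl rfl
  · exact Or.inr ha

lemma sub_wzpz [Fintype V] (G : SimpleGraph V) (x₀ : V) :
    ∀ m, Sub (wzpz G x₀ m) := by
  intro m
  induction m with
  | zero => exact sub_base G x₀
  | succ m ih => exact sub_iter G (m + 1) _ ih _

end StmtAux

open StmtAux in
/-- For all `ℓ ≥ 0` and every vertex `x₀` of a finite connected graph, the KCN
`ℓ`-neighborhood is contained in the WZPZ `(ℓ−1)`-neighborhood (with the convention
`N^W_{−1} := N^W_0`, realized here by truncated subtraction). -/
theorem stmt_7 {V : Type} [Fintype V] (G : SimpleGraph V) (hconn : G.Connected)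
    (ℓ : ℕ) (x₀ : V) :
    kcnVerts G ℓ x₀ ⊆ (wzpz G x₀ (ℓ - 1)).1 ∧
      kcnEdges G ℓ x₀ ⊆ (wzpz G x₀ (ℓ - 1)).2 := by
  have key : ∀ {a b : V} (p : G.Walk a b), G.Adj x₀ a → G.Adj x₀ b → a ≠ b →
      p.IsPath → p.length ≤ ℓ - 2 →
      (∀ v ∈ p.support, v ∈ (wzpz G x₀ (ℓ - 1)).1) ∧
      (∀ e ∈ p.edges, e ∈ (wzpz G x₀ (ℓ - 1)).2) := by
    intro a b p haa hbb hne hpath hlen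
    rcases Nat.lt_or_ge ℓ 3 with h3 | h3
    · have h0 : p.length = 0 := by omega
      exact absurd (SimpleGraph.Walk.eq_of_length_eq_zero h0) hne
    · have hrw : ℓ - 1 = (ℓ - 2) + 1 := by omega
      rw [hrw]
      have hQ : wzpz G x₀ (ℓ - 2 + 1) = wSat G (ℓ - 2 + 1) (wzpz G x₀ (ℓ - 2)) := rfl
      have hfix : wAdd G (ℓ - 2 + 1) (wzpz G x₀ (ℓ - 2 + 1)) = wzpz G x₀ (ℓ - 2 + 1) := by
        rw [hQ]; exact wSat_fixed G (ℓ - 2 + 1) (wzpz G x₀ (ℓ - 2))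
      have hsub : Sub (wzpz G x₀ (ℓ - 2 + 1)) := sub_wzpz G x₀ _
      have hbase := base_le G x₀ (ℓ - 2 + 1)
      have haQ : a ∈ (wzpz G x₀ (ℓ - 2 + 1)).1 := hbase.1 (Or.inr haa)
      have hbQ : b ∈ (wzpz G x₀ (ℓ - 2 + 1)).1 := hbase.1 (Or.inr hbb)
      exact core G (ℓ - 2 + 1) _ hfix hsub p.length p rfl hpath (by omega) haQ hbQ
  constructor
  · rintro v (hv | ⟨a, b, haa, hbb, hne, p, hpath, hlen, hsupp⟩)
    · exact (base_le G x₀ (ℓ - 1)).1 hv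
    · exact (key p haa hbb hne hpath hlen).1 v hsupp
  · rintro e (⟨a, haa, rfl⟩ | ⟨a, b, haa, hbb, hne, p, hpath, hlen, hmem⟩)
    · exact (base_le G x₀ (ℓ - 1)).2 ⟨a, haa, rfl⟩
    · exact (key p haa hbb hne hpath hlen).2 e hmem
end

section
/- Let G be a finite connected graph in which every cycle has length at most ℓ₀. Then for every vertex x₀ and every k ≥ 0, the WZPZ-neighborhood N^W_k(x₀) is contained in the KCN-neighborhood N^K_{ℓ₀}(x₀). -/
section Helpers

open SimpleGraph Walk

variable {V : Type} {G : SimpleGraph V}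

lemma isPath_append_iff' {u v w : V} (p : G.Walk u v) (q : G.Walk v w) :
    (p.append q).IsPath ↔
      p.IsPath ∧ q.IsPath ∧ ∀ x ∈ p.support, x ∈ q.support → x = v := by
  rw [Walk.isPath_def, Walk.support_append, List.nodup_append]
  constructor
  · rintro ⟨h1, h2, h3⟩
    refine ⟨Walk.IsPath.mk' h1, Walk.IsPath.mk' ?_, ?_⟩
    · rw [q.support_eq_cons]
      exact List.nodup_cons.mpr ⟨fun hv => h3 _ p.end_mem_support _ hv rfl, h2⟩
    · intro x hx hxq
      rw [q.support_eq_cons] at hxq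
      rcases List.mem_cons.mp hxq with h | h
      · exact h
      · exact absurd rfl (h3 x hx x h)
  · rintro ⟨hp, hq, hj⟩
    have hqn := hq.support_nodup
    rw [q.support_eq_cons, List.nodup_cons] at hqn
    refine ⟨hp.support_nodup, hqn.2, ?_⟩
    intro x hx y hxt hxy; subst hxy
    have hxq : x ∈ q.support := by
      rw [q.support_eq_cons]; exact List.mem_cons_of_mem _ hxt
    have := hj x hx hxq
    subst this
    exact hqn.1 hxt

lemma append_isCycle' {a b : V} (hab : a ≠ b) {p : G.Walk a b} {q : G.Walk b a}
    (hp : p.IsPath) (hq : q.IsPath)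
    (hsup : ∀ x ∈ p.support, x ∈ q.support → x = a ∨ x = b)
    (hdisj : ∀ e ∈ p.edges, e ∉ q.edges) : (p.append q).IsCycle := by
  have hpn : a ∉ p.support.tail := by
    have := hp.support_nodup
    rw [p.support_eq_cons, List.nodup_cons] at this
    exact this.1
  have hqn : b ∉ q.support.tail := by
    have := hq.support_nodup
    rw [q.support_eq_cons, List.nodup_cons] at this
    exact this.1
  refine ⟨⟨⟨?_⟩, ?_⟩, ?_⟩
  · rw [Walk.edges_append, List.nodup_append]
    exact ⟨hp.isTrail.edges_nodup, hq.isTrail.edges_nodup, fun e he e' he' hee => hdisj e he (hee ▸ he')⟩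
  · intro h
    have h0 : (p.append q).length = 0 := by rw [h]; rfl
    rw [Walk.length_append] at h0
    exact hab (Walk.eq_of_length_eq_zero (p := p) (by omega))
  · rw [Walk.tail_support_append, List.nodup_append]
    refine ⟨hp.support_nodup.tail, hq.support_nodup.tail, ?_⟩
    intro x hx y hx' hxy; subst hxy
    have hxp : x ∈ p.support := List.mem_of_mem_tail hx
    have hxq : x ∈ q.support := List.mem_of_mem_tail hx'
    rcases hsup x hxp hxq with rfl | rfl
    · exact hpn hx
    · exact hqn hx'

lemma mem_tail_of_closed {u x : V} (c : G.Walk u u) (hn : ¬c.Nil) :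
    x ∈ c.support ↔ x ∈ c.support.tail := by
  obtain ⟨w, h, q, rfl⟩ := Walk.not_nil_iff.mp hn
  rw [Walk.support_cons]
  constructor
  · rintro h'
    rcases List.mem_cons.mp h' with rfl | h'
    · exact q.end_mem_support
    · exact h'
  · exact fun h' => List.mem_cons_of_mem _ h'

lemma cycle_kcn_base {ℓ₀ : ℕ} {x₀ : V} (hcyc : cyclesBounded G ℓ₀)
    (c : G.Walk x₀ x₀) (hc : c.IsCycle) :
    (∀ v ∈ c.support, v ∈ kcnVerts G ℓ₀ x₀) ∧
      (∀ e ∈ c.edges, e ∈ kcnEdges G ℓ₀ x₀) := by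
  have hnil : ¬c.Nil := fun hnl => hc.ne_nil hnl.eq_nil
  obtain ⟨n, h1, rest, rfl⟩ := Walk.not_nil_iff.mp hnil
  have hrn : rest.support.Nodup := by
    have := hc.support_nodup
    rwa [Walk.support_cons] at this
  obtain ⟨m, h2, qq, hq⟩ := Walk.exists_eq_cons_of_ne h1.ne rest.reverse
  have hrevsup : rest.reverse.support.Nodup := by
    rw [Walk.support_reverse]; exact List.nodup_reverse.mpr hrn
  have hx₀qq : x₀ ∉ qq.support ∧ qq.support.Nodup := by
    rw [hq, Walk.support_cons] at hrevsup
    exact List.nodup_cons.mp hrevsup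
  have qqpath : qq.IsPath := Walk.IsPath.mk' hx₀qq.2
  have hlen : (Walk.cons h1 rest).length ≤ ℓ₀ := hcyc _ _ hc
  have h3 : 3 ≤ (Walk.cons h1 rest).length := hc.three_le_length
  have hlc : (Walk.cons h1 rest).length = rest.length + 1 := Walk.length_cons _ _
  have hql : qq.length + 1 = rest.length := by
    have : rest.reverse.length = qq.length + 1 := by rw [hq]; exact Walk.length_cons _ _
    rw [Walk.length_reverse] at this
    omega
  have hmn : m ≠ n := by
    intro h
    subst h
    have hnil' : qq = Walk.nil := (Walk.isPath_iff_eq_nil (p := qq)).mp qqpath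
    have : qq.length = 0 := by rw [hnil']; rfl
    omega
  have hqqlen : qq.length ≤ ℓ₀ - 2 := by omega
  have hrestmem : ∀ y, y ∈ rest.support ↔ (y = x₀ ∨ y ∈ qq.support) := by
    intro y
    have : y ∈ rest.support ↔ y ∈ rest.reverse.support := by
      rw [Walk.support_reverse, List.mem_reverse]
    rw [this, hq, Walk.support_cons, List.mem_cons]
  constructor
  · intro v hv
    rw [Walk.support_cons, List.mem_cons] at hv
    have hx₀mem : x₀ ∈ kcnVerts G ℓ₀ x₀ := Or.inl (Or.inl rfl)
    rcases hv with rfl | hv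
    · exact hx₀mem
    · rcases (hrestmem v).mp hv with rfl | hv
      · exact hx₀mem
      · exact Or.inr ⟨m, n, h2, h1, hmn, qq, qqpath, hqqlen, hv⟩
  · intro e he
    rw [Walk.edges_cons, List.mem_cons] at he
    rcases he with rfl | he
    · exact Or.inl ⟨n, h1, rfl⟩
    · have : e ∈ rest.reverse.edges := by
        rw [Walk.edges_reverse, List.mem_reverse]; exact he
      rw [hq, Walk.edges_cons, List.mem_cons] at this
      rcases this with rfl | he'
      · exact Or.inl ⟨m, h2, rfl⟩
      · exact Or.inr ⟨m, n, h2, h1, hmn, qq, qqpath, hqqlen, he'⟩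

lemma cycle_kcn {ℓ₀ : ℕ} {x₀ : V} (hcyc : cyclesBounded G ℓ₀)
    {u : V} (c : G.Walk u u) (hc : c.IsCycle) (hx : x₀ ∈ c.support) :
    (∀ v ∈ c.support, v ∈ kcnVerts G ℓ₀ x₀) ∧
      (∀ e ∈ c.edges, e ∈ kcnEdges G ℓ₀ x₀) := by
  classical
  have hc' := hc.rotate hx
  have hnil : ¬c.Nil := fun hnl => hc.ne_nil hnl.eq_nil
  have hnil' : ¬(c.rotate x₀ hx).Nil := fun hnl => hc'.ne_nil hnl.eq_nil
  obtain ⟨HV, HE⟩ := cycle_kcn_base hcyc (c.rotate x₀ hx) hc'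
  constructor
  · intro v hv
    apply HV
    rw [mem_tail_of_closed _ hnil'
      , ((Walk.support_rotate c x₀ hx).mem_iff (a := v))]
    exact (mem_tail_of_closed _ hnil).mp hv
  · intro e he
    exact HE e (((Walk.rotate_edges c x₀ hx).mem_iff (a := e)).mpr he)

end Helpers

section Invariant

open SimpleGraph Walk

variable {V : Type} {G : SimpleGraph V}

/-- The invariant maintained by the WZPZ construction. -/
structure Good (G : SimpleGraph V) (ℓ₀ : ℕ) (x₀ : V)
    (P : Set V × Set (Sym2 V)) : Prop where
  hx : x₀ ∈ P.1
  hnbr : ∀ n, G.Adj x₀ n → n ∈ P.1 ∧ s(x₀, n) ∈ P.2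
  hends : ∀ u v : V, s(u, v) ∈ P.2 → u ∈ P.1 ∧ v ∈ P.1
  hpair : ∀ u ∈ P.1, ∀ w ∈ P.1, u ≠ w →
    ∃ r : G.Walk u w, r.IsPath ∧ x₀ ∈ r.support ∧
      (∀ e ∈ r.edges, e ∈ P.2) ∧ (∀ v ∈ r.support, v ∈ P.1)
  hV : P.1 ⊆ kcnVerts G ℓ₀ x₀
  hE : P.2 ⊆ kcnEdges G ℓ₀ x₀

variable {ℓ₀ : ℕ} {x₀ : V}

lemma good_congr {P Q : Set V × Set (Sym2 V)} (h1 : P.1 = Q.1) (h2 : P.2 = Q.2)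
    (hP : Good G ℓ₀ x₀ P) : Good G ℓ₀ x₀ Q := by
  have : P = Q := Prod.ext h1 h2
  exact this ▸ hP

lemma exists_decomp2 {a b u w : V} (p : G.Walk a b) (hu : u ∈ p.support)
    (hw : w ∈ p.support) :
    (∃ (q1 : G.Walk a u) (q2 : G.Walk u w) (q3 : G.Walk w b),
       q1.append (q2.append q3) = p) ∨
    (∃ (q1 : G.Walk a w) (q2 : G.Walk w u) (q3 : G.Walk u b),
       q1.append (q2.append q3) = p) := by
  classical
  have hspec := p.take_spec hu
  have hw' : w ∈ ((p.takeUntil u hu).append (p.dropUntil u hu)).support := by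
    rw [hspec]; exact hw
  rcases (Walk.mem_support_append_iff _ _).mp hw' with h | h
  · right
    refine ⟨(p.takeUntil u hu).takeUntil w h, (p.takeUntil u hu).dropUntil w h,
      p.dropUntil u hu, ?_⟩
    rw [Walk.append_assoc, Walk.take_spec, hspec]
  · left
    refine ⟨p.takeUntil u hu, (p.dropUntil u hu).takeUntil w h,
      (p.dropUntil u hu).dropUntil w h, ?_⟩
    rw [Walk.take_spec, hspec]

/-- Connect an old vertex to a new vertex on a pure fresh ear, through `x₀`. -/
lemma connect_old_new {P : Set V × Set (Sym2 V)} (hP : Good G ℓ₀ x₀ P)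
    {a b : V} (p : G.Walk a b) (hp : p.IsPath) (ha : a ∈ P.1) (hb : b ∈ P.1)
    (hpure : ∀ v ∈ p.support, v ∈ P.1 → v = a ∨ v = b)
    {qT : G.Walk b a} (hqT : qT.IsPath) (hx₀T : x₀ ∈ qT.support)
    (hTe : ∀ e ∈ qT.edges, e ∈ P.2) (hTs : ∀ v ∈ qT.support, v ∈ P.1)
    {u w : V} (hu : u ∈ P.1) (hw : w ∈ p.support) (hwP : w ∉ P.1) :
    ∃ r : G.Walk u w, r.IsPath ∧ x₀ ∈ r.support ∧
      (∀ e ∈ r.edges, e ∈ P.2 ∨ e ∈ p.edges) ∧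
      (∀ v ∈ r.support, v ∈ P.1 ∨ v ∈ p.support) := by
  classical
  have hwa : w ≠ a := fun h => hwP (h ▸ ha)
  have hwb : w ≠ b := fun h => hwP (h ▸ hb)
  set t := p.takeUntil w hw with ht_def
  set d := p.dropUntil w hw with hd_def
  have hspec : t.append d = p := p.take_spec hw
  have htd : (t.append d).IsPath := by rw [hspec]; exact hp
  obtain ⟨ht, hd, hj⟩ := (isPath_append_iff' t d).mp htd
  have hts : ∀ x ∈ t.support, x ∈ p.support := fun x hx =>
    p.support_takeUntil_subset hw hx
  have hds : ∀ x ∈ d.support, x ∈ p.support := fun x hx =>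
    p.support_dropUntil_subset hw hx
  have hte : ∀ e ∈ t.edges, e ∈ p.edges := fun e he =>
    p.edges_takeUntil_subset hw he
  have hde : ∀ e ∈ d.edges, e ∈ p.edges := fun e he =>
    p.edges_dropUntil_subset hw he
  have ka : ∀ x ∈ t.support, x ∈ P.1 → x = a := by
    intro x hx hxP
    rcases hpure x (hts x hx) hxP with rfl | rfl
    · rfl
    · exact absurd (hj x hx d.end_mem_support) hwb.symm
  have kb : ∀ x ∈ d.support, x ∈ P.1 → x = b := by
    intro x hx hxP
    rcases hpure x (hds x hx) hxP with rfl | rfl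
    · exact absurd (hj x t.start_mem_support hx) hwa.symm
    · rfl
  by_cases hua : u = a
  · subst hua
    refine ⟨qT.reverse.append d.reverse, ?_, ?_, ?_, ?_⟩
    · rw [isPath_append_iff']
      refine ⟨hqT.reverse, hd.reverse, ?_⟩
      intro x hx hx'
      rw [Walk.support_reverse, List.mem_reverse] at hx hx'
      exact kb x hx' (hTs x hx)
    · exact (Walk.mem_support_append_iff _ _).mpr
        (Or.inl (by rw [Walk.support_reverse, List.mem_reverse]; exact hx₀T))
    · intro e he
      rw [Walk.edges_append, List.mem_append] at he
      rcases he with he | he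
      · rw [Walk.edges_reverse, List.mem_reverse] at he
        exact Or.inl (hTe e he)
      · rw [Walk.edges_reverse, List.mem_reverse] at he
        exact Or.inr (hde e he)
    · intro v hv
      rcases (Walk.mem_support_append_iff _ _).mp hv with hv | hv
      · rw [Walk.support_reverse, List.mem_reverse] at hv
        exact Or.inl (hTs v hv)
      · rw [Walk.support_reverse, List.mem_reverse] at hv
        exact Or.inr (hds v hv)
  · by_cases hub : u = b
    · subst hub
      refine ⟨qT.append t, ?_, ?_, ?_, ?_⟩
      · rw [isPath_append_iff']
        exact ⟨hqT, ht, fun x hx hx' => ka x hx' (hTs x hx)⟩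
      · exact (Walk.mem_support_append_iff _ _).mpr (Or.inl hx₀T)
      · intro e he
        rcases List.mem_append.mp (by rwa [Walk.edges_append] at he) with he | he
        · exact Or.inl (hTe e he)
        · exact Or.inr (hte e he)
      · intro v hv
        rcases (Walk.mem_support_append_iff _ _).mp hv with hv | hv
        · exact Or.inl (hTs v hv)
        · exact Or.inr (hts v hv)
    · obtain ⟨q', hq', hx₀q', hq'e, hq's⟩ := hP.hpair u hu a ha hua
      refine ⟨q'.append t, ?_, ?_, ?_, ?_⟩
      · rw [isPath_append_iff']
        exact ⟨hq', ht, fun x hx hx' => ka x hx' (hq's x hx)⟩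
      · exact (Walk.mem_support_append_iff _ _).mpr (Or.inl hx₀q')
      · intro e he
        rcases List.mem_append.mp (by rwa [Walk.edges_append] at he) with he | he
        · exact Or.inl (hq'e e he)
        · exact Or.inr (hte e he)
      · intro v hv
        rcases (Walk.mem_support_append_iff _ _).mp hv with hv | hv
        · exact Or.inl (hq's v hv)
        · exact Or.inr (hts v hv)

/-- Connect two new vertices on a pure fresh ear, through `x₀`, ordered case. -/
lemma connect_new_new_ordered {P : Set V × Set (Sym2 V)}
    {a b : V} (p : G.Walk a b) (hp : p.IsPath) (ha : a ∈ P.1) (hb : b ∈ P.1)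
    (hpure : ∀ v ∈ p.support, v ∈ P.1 → v = a ∨ v = b)
    {qT : G.Walk b a} (hqT : qT.IsPath) (hx₀T : x₀ ∈ qT.support)
    (hTe : ∀ e ∈ qT.edges, e ∈ P.2) (hTs : ∀ v ∈ qT.support, v ∈ P.1)
    {u w : V} (huP : u ∉ P.1) (hwP : w ∉ P.1) (hne : u ≠ w)
    (q1 : G.Walk a u) (q2 : G.Walk u w) (q3 : G.Walk w b)
    (hdec : q1.append (q2.append q3) = p) :
    ∃ r : G.Walk u w, r.IsPath ∧ x₀ ∈ r.support ∧
      (∀ e ∈ r.edges, e ∈ P.2 ∨ e ∈ p.edges) ∧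
      (∀ v ∈ r.support, v ∈ P.1 ∨ v ∈ p.support) := by
  have hp' : (q1.append (q2.append q3)).IsPath := by rw [hdec]; exact hp
  obtain ⟨hq1, h23, hj1⟩ := (isPath_append_iff' _ _).mp hp'
  obtain ⟨hq2, hq3, hj2⟩ := (isPath_append_iff' _ _).mp h23
  have hs1 : ∀ x ∈ q1.support, x ∈ p.support := by
    intro x hx; rw [← hdec]
    exact (Walk.mem_support_append_iff _ _).mpr (Or.inl hx)
  have hs3 : ∀ x ∈ q3.support, x ∈ p.support := by
    intro x hx; rw [← hdec]
    exact (Walk.mem_support_append_iff _ _).mpr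
      (Or.inr ((Walk.mem_support_append_iff _ _).mpr (Or.inr hx)))
  have he1 : ∀ e ∈ q1.edges, e ∈ p.edges := by
    intro e he; rw [← hdec, Walk.edges_append, List.mem_append]
    exact Or.inl he
  have he3 : ∀ e ∈ q3.edges, e ∈ p.edges := by
    intro e he; rw [← hdec, Walk.edges_append, List.mem_append]
    refine Or.inr ?_
    rw [Walk.edges_append, List.mem_append]
    exact Or.inr he
  have huq3 : u ∉ q3.support := by
    intro h
    exact hne (hj2 u q2.start_mem_support h)
  have hbq1 : b ∉ q1.support := by
    intro h
    have : b ∈ (q2.append q3).support :=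
      (Walk.mem_support_append_iff _ _).mpr (Or.inr q3.end_mem_support)
    exact huP ((hj1 b h this) ▸ hb)
  have haq3 : a ∉ q3.support := by
    intro h
    have : a ∈ (q2.append q3).support :=
      (Walk.mem_support_append_iff _ _).mpr (Or.inr h)
    exact huP ((hj1 a q1.start_mem_support this) ▸ ha)
  have hinner : (qT.reverse.append q3.reverse).IsPath := by
    rw [isPath_append_iff']
    refine ⟨hqT.reverse, hq3.reverse, ?_⟩
    intro x hx hx'
    rw [Walk.support_reverse, List.mem_reverse] at hx hx'
    rcases hpure x (hs3 x hx') (hTs x hx) with rfl | rfl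
    · exact absurd hx' haq3
    · rfl
  refine ⟨q1.reverse.append (qT.reverse.append q3.reverse), ?_, ?_, ?_, ?_⟩
  · rw [isPath_append_iff']
    refine ⟨hq1.reverse, hinner, ?_⟩
    intro x hx hx'
    rw [Walk.support_reverse, List.mem_reverse] at hx
    rcases (Walk.mem_support_append_iff _ _).mp hx' with hx' | hx'
    · rw [Walk.support_reverse, List.mem_reverse] at hx'
      rcases hpure x (hs1 x hx) (hTs x hx') with rfl | rfl
      · rfl
      · exact absurd hx hbq1
    · rw [Walk.support_reverse, List.mem_reverse] at hx'
      have hxu : x = u := hj1 x hx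
        ((Walk.mem_support_append_iff _ _).mpr (Or.inr hx'))
      exact absurd (hxu ▸ hx') huq3
  · refine (Walk.mem_support_append_iff _ _).mpr (Or.inr ?_)
    refine (Walk.mem_support_append_iff _ _).mpr (Or.inl ?_)
    rw [Walk.support_reverse, List.mem_reverse]; exact hx₀T
  · intro e he
    rw [Walk.edges_append, List.mem_append] at he
    rcases he with he | he
    · rw [Walk.edges_reverse, List.mem_reverse] at he
      exact Or.inr (he1 e he)
    · rw [Walk.edges_append, List.mem_append] at he
      rcases he with he | he
      · rw [Walk.edges_reverse, List.mem_reverse] at he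
        exact Or.inl (hTe e he)
      · rw [Walk.edges_reverse, List.mem_reverse] at he
        exact Or.inr (he3 e he)
  · intro v hv
    rcases (Walk.mem_support_append_iff _ _).mp hv with hv | hv
    · rw [Walk.support_reverse, List.mem_reverse] at hv
      exact Or.inr (hs1 v hv)
    · rcases (Walk.mem_support_append_iff _ _).mp hv with hv | hv
      · rw [Walk.support_reverse, List.mem_reverse] at hv
        exact Or.inl (hTs v hv)
      · rw [Walk.support_reverse, List.mem_reverse] at hv
        exact Or.inr (hs3 v hv)

lemma connect_new_new {P : Set V × Set (Sym2 V)}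
    {a b : V} (p : G.Walk a b) (hp : p.IsPath) (ha : a ∈ P.1) (hb : b ∈ P.1)
    (hpure : ∀ v ∈ p.support, v ∈ P.1 → v = a ∨ v = b)
    {qT : G.Walk b a} (hqT : qT.IsPath) (hx₀T : x₀ ∈ qT.support)
    (hTe : ∀ e ∈ qT.edges, e ∈ P.2) (hTs : ∀ v ∈ qT.support, v ∈ P.1)
    {u w : V} (hu : u ∈ p.support) (huP : u ∉ P.1)
    (hw : w ∈ p.support) (hwP : w ∉ P.1) (hne : u ≠ w) :
    ∃ r : G.Walk u w, r.IsPath ∧ x₀ ∈ r.support ∧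
      (∀ e ∈ r.edges, e ∈ P.2 ∨ e ∈ p.edges) ∧
      (∀ v ∈ r.support, v ∈ P.1 ∨ v ∈ p.support) := by
  rcases exists_decomp2 p hu hw with ⟨q1, q2, q3, hdec⟩ | ⟨q1, q2, q3, hdec⟩
  · exact connect_new_new_ordered p hp ha hb hpure hqT hx₀T hTe hTs huP hwP hne
      q1 q2 q3 hdec
  · obtain ⟨r, hr, hx₀r, hre, hrs⟩ :=
      connect_new_new_ordered p hp ha hb hpure hqT hx₀T hTe hTs hwP huP hne.symm
        q1 q2 q3 hdec
    refine ⟨r.reverse, hr.reverse, ?_, ?_, ?_⟩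
    · rw [Walk.support_reverse, List.mem_reverse]; exact hx₀r
    · intro e he
      rw [Walk.edges_reverse, List.mem_reverse] at he
      exact hre e he
    · intro v hv
      rw [Walk.support_reverse, List.mem_reverse] at hv
      exact hrs v hv

end Invariant

section Absorb

open SimpleGraph Walk

variable {V : Type} {G : SimpleGraph V} {ℓ₀ : ℕ} {x₀ : V}

lemma good_ear (hcyc : cyclesBounded G ℓ₀) {P : Set V × Set (Sym2 V)}
    (hP : Good G ℓ₀ x₀ P) {a b : V} (p : G.Walk a b) (hp : p.IsPath)
    (ha : a ∈ P.1) (hb : b ∈ P.1) (hab : a ≠ b)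
    (hpure : ∀ v ∈ p.support, v ∈ P.1 → v = a ∨ v = b)
    (hfresh : ∀ e ∈ p.edges, e ∉ P.2) :
    Good G ℓ₀ x₀ (P.1 ∪ {v | v ∈ p.support}, P.2 ∪ {e | e ∈ p.edges}) := by
  classical
  obtain ⟨qT, hqT, hx₀T, hTe, hTs⟩ := hP.hpair b hb a ha hab.symm
  have hcycle : (p.append qT).IsCycle := by
    refine append_isCycle' hab hp hqT ?_ ?_
    · exact fun x hx hx' => hpure x hx (hTs x hx')
    · exact fun e he he' => hfresh e he (hTe e he')
  have hx₀c : x₀ ∈ (p.append qT).support :=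
    (Walk.mem_support_append_iff _ _).mpr (Or.inr hx₀T)
  obtain ⟨HV, HE⟩ := cycle_kcn hcyc _ hcycle hx₀c
  refine ⟨Or.inl hP.hx, ?_, ?_, ?_, ?_, ?_⟩
  · intro n hn
    exact ⟨Or.inl (hP.hnbr n hn).1, Or.inl (hP.hnbr n hn).2⟩
  · rintro u v (h | h)
    · exact ⟨Or.inl (hP.hends u v h).1, Or.inl (hP.hends u v h).2⟩
    · exact ⟨Or.inr (p.fst_mem_support_of_mem_edges h),
        Or.inr (p.snd_mem_support_of_mem_edges h)⟩
  · rintro u hu w hw hne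
    simp only [Set.mem_union, Set.mem_setOf_eq] at hu hw
    by_cases huP : u ∈ P.1
    · by_cases hwP : w ∈ P.1
      · obtain ⟨r, hr, hx₀r, hre, hrs⟩ := hP.hpair u huP w hwP hne
        exact ⟨r, hr, hx₀r, fun e he => Or.inl (hre e he),
          fun v hv => Or.inl (hrs v hv)⟩
      · have hw' : w ∈ p.support := hw.resolve_left hwP
        obtain ⟨r, hr, hx₀r, hre, hrs⟩ :=
          connect_old_new hP p hp ha hb hpure hqT hx₀T hTe hTs huP hw' hwP
        exact ⟨r, hr, hx₀r, hre, hrs⟩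
    · have hu' : u ∈ p.support := hu.resolve_left huP
      by_cases hwP : w ∈ P.1
      · obtain ⟨r, hr, hx₀r, hre, hrs⟩ :=
          connect_old_new hP p hp ha hb hpure hqT hx₀T hTe hTs hwP hu' huP
        refine ⟨r.reverse, hr.reverse, ?_, ?_, ?_⟩
        · rw [Walk.support_reverse, List.mem_reverse]; exact hx₀r
        · intro e he
          rw [Walk.edges_reverse, List.mem_reverse] at he
          exact hre e he
        · intro v hv
          rw [Walk.support_reverse, List.mem_reverse] at hv
          exact hrs v hv
      · have hw' : w ∈ p.support := hw.resolve_left hwP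
        exact connect_new_new p hp ha hb hpure hqT hx₀T hTe hTs hu' huP hw' hwP hne
  · rintro v (hv | hv)
    · exact hP.hV hv
    · exact HV v ((Walk.mem_support_append_iff _ _).mpr (Or.inl hv))
  · rintro e (he | he)
    · exact hP.hE he
    · exact HE e (by rw [Walk.edges_append, List.mem_append]; exact Or.inl he)

lemma good_absorb (hcyc : cyclesBounded G ℓ₀) :
    ∀ (n : ℕ) (P : Set V × Set (Sym2 V)) {a b : V} (p : G.Walk a b),
      p.length ≤ n → Good G ℓ₀ x₀ P → p.IsPath → a ∈ P.1 → b ∈ P.1 →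
      Good G ℓ₀ x₀ (P.1 ∪ {v | v ∈ p.support}, P.2 ∪ {e | e ∈ p.edges}) := by
  classical
  intro n
  induction n with
  | zero =>
    intro P a b p hlen hP hp ha hb
    have hnil : p.Nil := Walk.nil_iff_length_eq.mpr (Nat.le_zero.mp hlen)
    have hsupp : p.support = [a] := Walk.nil_iff_support_eq.mp hnil
    have hedges : p.edges = [] := by
      have : p.edges.length = 0 := by
        rw [Walk.length_edges]; exact Nat.le_zero.mp hlen
      exact List.length_eq_zero_iff.mp this
    refine good_congr ?_ ?_ hP
    · ext x
      simp only [Set.mem_union, Set.mem_setOf_eq, hsupp, List.mem_singleton]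
      constructor
      · exact Or.inl
      · rintro (h | rfl)
        · exact h
        · exact ha
    · ext e
      simp [hedges]
  | succ n ih =>
    intro P a b p hlen hP hp ha hb
    by_cases hsplit : ∃ v, v ∈ p.support ∧ v ∈ P.1 ∧ v ≠ a ∧ v ≠ b
    · obtain ⟨v, hvs, hvP, hva, hvb⟩ := hsplit
      set t := p.takeUntil v hvs with ht_def
      set d := p.dropUntil v hvs with hd_def
      have hspec : t.append d = p := p.take_spec hvs
      have hlen2 : t.length + d.length = p.length := by
        rw [← Walk.length_append, hspec]
      have htpos : t.length ≠ 0 := fun h =>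
        hva (Walk.eq_of_length_eq_zero (p := t) h).symm
      have hdpos : d.length ≠ 0 := fun h =>
        hvb (Walk.eq_of_length_eq_zero (p := d) h)
      have G1 := ih P t (by omega) hP (hp.takeUntil hvs) ha hvP
      have G2 := ih (P.1 ∪ {x | x ∈ t.support}, P.2 ∪ {e | e ∈ t.edges}) d
        (by omega) G1 (hp.dropUntil hvs) (Or.inl hvP) (Or.inl hb)
      refine good_congr ?_ ?_ G2
      · ext x
        have : x ∈ p.support ↔ x ∈ t.support ∨ x ∈ d.support := by
          rw [← hspec]; exact Walk.mem_support_append_iff t d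
        simp only [Set.mem_union, Set.mem_setOf_eq, this]
        tauto
      · ext e
        have : e ∈ p.edges ↔ e ∈ t.edges ∨ e ∈ d.edges := by
          rw [← hspec, Walk.edges_append, List.mem_append]
        simp only [Set.mem_union, Set.mem_setOf_eq, this]
        tauto
    · push_neg at hsplit
      have hpure : ∀ v ∈ p.support, v ∈ P.1 → v = a ∨ v = b := by
        intro v hvs hvP
        by_contra h
        push_neg at h
        exact h.2 (hsplit v hvs hvP h.1)
      by_cases hab : a = b
      · subst hab
        have hnil : p = Walk.nil := (Walk.isPath_iff_eq_nil (p := p)).mp hp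
        subst hnil
        refine good_congr ?_ ?_ hP
        · ext x
          simp only [Set.mem_union, Set.mem_setOf_eq, Walk.support_nil,
            List.mem_singleton]
          constructor
          · exact Or.inl
          · rintro (h | rfl)
            · exact h
            · exact ha
        · ext e
          simp [Walk.edges_nil]
      · by_cases hfresh : ∀ e ∈ p.edges, e ∉ P.2
        · exact good_ear hcyc hP p hp ha hb hab hpure hfresh
        · push_neg at hfresh
          obtain ⟨e, he, heP⟩ := hfresh
          -- e is an edge of p lying in P.2; show p is the single edge s(a,b) ∈ P.2
          revert he heP
          induction e using Sym2.ind with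
          | _ x y =>
          intro he heP
          have hxy : G.Adj x y := p.adj_of_mem_edges he
          have hx1 : x ∈ P.1 := (hP.hends x y heP).1
          have hy1 : y ∈ P.1 := (hP.hends x y heP).2
          have hxs : x ∈ p.support := p.fst_mem_support_of_mem_edges he
          have hys : y ∈ p.support := p.snd_mem_support_of_mem_edges he
          have heab : s(x, y) = s(a, b) := by
            rcases hpure x hxs hx1 with rfl | rfl
            · rcases hpure y hys hy1 with rfl | rfl
              · exact absurd rfl hxy.ne
              · rfl
            · rcases hpure y hys hy1 with rfl | rfl
              · exact Sym2.eq_swap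
              · exact absurd rfl hxy.ne
          rw [heab] at heP he
          obtain ⟨c, h1, q, rfl⟩ := Walk.exists_eq_cons_of_ne hab p
          have hq : q.IsPath ∧ a ∉ q.support := by
            have := (Walk.cons_isPath_iff h1 q).mp hp
            exact ⟨this.1, this.2⟩
          rw [Walk.edges_cons, List.mem_cons] at he
          have hcb : c = b := by
            rcases he with he | he
            · rcases Sym2.eq_iff.mp he with ⟨-, hbc⟩ | ⟨hac, hba⟩
              · exact hbc.symm
              · exact absurd hba.symm hab
            · exact absurd (q.fst_mem_support_of_mem_edges he) hq.2
          subst hcb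
          have hqnil : q = Walk.nil := (Walk.isPath_iff_eq_nil (p := q)).mp hq.1
          subst hqnil
          refine good_congr ?_ ?_ hP
          · ext z
            simp only [Set.mem_union, Set.mem_setOf_eq]
            constructor
            · exact Or.inl
            · rintro (h | h)
              · exact h
              · rw [Walk.support_cons, Walk.support_nil] at h
                rcases List.mem_cons.mp h with rfl | h
                · exact ha
                · rw [List.mem_singleton] at h
                  rw [h]
                  exact hb
          · ext f
            simp only [Set.mem_union, Set.mem_setOf_eq]
            constructor
            · exact Or.inl
            · rintro (h | h)
              · exact h
              · rw [Walk.edges_cons, Walk.edges_nil, List.mem_singleton] at h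
                rw [h]
                exact heP

end Absorb

section Final

open SimpleGraph Walk

variable {V : Type} {G : SimpleGraph V} {ℓ₀ : ℕ} {x₀ : V}

lemma good_base : Good G ℓ₀ x₀ (wzpzBase G x₀) := by
  classical
  refine ⟨Or.inl rfl, ?_, ?_, ?_, ?_, ?_⟩
  · intro n hn
    exact ⟨Or.inr hn, ⟨n, hn, rfl⟩⟩
  · rintro u v ⟨n, hn, he⟩
    rcases Sym2.eq_iff.mp he with ⟨rfl, rfl⟩ | ⟨rfl, rfl⟩
    · exact ⟨Or.inl rfl, Or.inr hn⟩
    · exact ⟨Or.inr hn, Or.inl rfl⟩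
  · rintro u hu w hw hne
    rcases hu with hu | hu
    · rcases hw with hw | hw
      · exact absurd (hu.trans hw.symm) hne
      · have hu' : u = x₀ := hu
        have hw' : G.Adj x₀ w := hw
        have hadj : G.Adj u w := by rw [hu']; exact hw'
        refine ⟨Walk.cons hadj Walk.nil, ?_, ?_, ?_, ?_⟩
        · rw [Walk.cons_isPath_iff]
          refine ⟨Walk.IsPath.nil, ?_⟩
          rw [Walk.support_nil, List.mem_singleton]
          exact hne
        · rw [Walk.support_cons, Walk.support_nil]
          exact List.mem_cons.mpr (Or.inl hu'.symm)
        · intro e he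
          rw [Walk.edges_cons, Walk.edges_nil, List.mem_singleton] at he
          refine ⟨w, hw', ?_⟩
          rw [he, hu']
        · intro v hv
          rw [Walk.support_cons, Walk.support_nil] at hv
          rcases List.mem_cons.mp hv with rfl | hv
          · exact Or.inl hu'
          · rw [List.mem_singleton] at hv
            rw [hv]
            exact Or.inr hw'
    · have hu' : G.Adj x₀ u := hu
      rcases hw with hw | hw
      · have hw' : w = x₀ := hw
        have hadj : G.Adj u w := by rw [hw']; exact hu'.symm
        refine ⟨Walk.cons hadj Walk.nil, ?_, ?_, ?_, ?_⟩
        · rw [Walk.cons_isPath_iff]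
          refine ⟨Walk.IsPath.nil, ?_⟩
          rw [Walk.support_nil, List.mem_singleton]
          exact hne
        · rw [Walk.support_cons, Walk.support_nil]
          exact List.mem_cons_of_mem _ (List.mem_singleton.mpr hw'.symm)
        · intro e he
          rw [Walk.edges_cons, Walk.edges_nil, List.mem_singleton] at he
          refine ⟨u, hu', ?_⟩
          rw [he, hw']
          exact Sym2.eq_swap
        · intro v hv
          rw [Walk.support_cons, Walk.support_nil] at hv
          rcases List.mem_cons.mp hv with rfl | hv
          · exact Or.inr hu'
          · rw [List.mem_singleton] at hv
            rw [hv]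
            exact Or.inl hw'
      · have hw' : G.Adj x₀ w := hw
        refine ⟨Walk.cons hu'.symm (Walk.cons hw' Walk.nil), ?_, ?_, ?_, ?_⟩
        · apply Walk.IsPath.mk'
          rw [Walk.support_cons, Walk.support_cons, Walk.support_nil]
          refine List.nodup_cons.mpr ⟨?_, List.nodup_cons.mpr
            ⟨?_, List.nodup_singleton _⟩⟩
          · intro h
            rcases List.mem_cons.mp h with h | h
            · exact hu'.ne' h
            · rw [List.mem_singleton] at h
              exact hne h
          · rw [List.mem_singleton]
            exact hw'.ne
        · rw [Walk.support_cons, Walk.support_cons]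
          exact List.mem_cons_of_mem _ List.mem_cons_self
        · intro e he
          rw [Walk.edges_cons, Walk.edges_cons, Walk.edges_nil] at he
          rcases List.mem_cons.mp he with rfl | he
          · exact ⟨u, hu', Sym2.eq_swap⟩
          · rw [List.mem_singleton] at he
            subst he
            exact ⟨w, hw', rfl⟩
        · intro v hv
          rw [Walk.support_cons, Walk.support_cons, Walk.support_nil] at hv
          rcases List.mem_cons.mp hv with rfl | hv
          · exact Or.inr hu'
          rcases List.mem_cons.mp hv with rfl | hv
          · exact Or.inl rfl
          · rw [List.mem_singleton] at hv
            subst hv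
            exact Or.inr hw'
  · rintro v (hv | hv)
    · exact Or.inl (Or.inl hv)
    · exact Or.inl (Or.inr hv)
  · rintro e ⟨n, hn, rfl⟩
    exact Or.inl ⟨n, hn, rfl⟩

lemma good_wAdd (hcyc : cyclesBounded G ℓ₀) {P : Set V × Set (Sym2 V)}
    (hP : Good G ℓ₀ x₀ P) (s : ℕ) : Good G ℓ₀ x₀ (wAdd G s P) := by
  classical
  have habs : ∀ {a b : V}, a ∈ wBdry G P → b ∈ wBdry G P → ∀ (p : G.Walk a b),
      p.IsPath →
      Good G ℓ₀ x₀ (P.1 ∪ {v | v ∈ p.support}, P.2 ∪ {e | e ∈ p.edges}) := by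
    intro a b ha hb p hpath
    exact good_absorb hcyc p.length P p le_rfl hP hpath ha.1 hb.1
  refine ⟨Or.inl hP.hx, ?_, ?_, ?_, ?_, ?_⟩
  · intro n hn
    exact ⟨Or.inl (hP.hnbr n hn).1, Or.inl (hP.hnbr n hn).2⟩
  · rintro u v (h | h)
    · exact ⟨Or.inl (hP.hends u v h).1, Or.inl (hP.hends u v h).2⟩
    · obtain ⟨a, ha, b, hb, p, hpath, hlen, hfr, he⟩ := h
      exact ⟨Or.inr ⟨a, ha, b, hb, p, hpath, hlen, hfr,
          p.fst_mem_support_of_mem_edges he⟩,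
        Or.inr ⟨a, ha, b, hb, p, hpath, hlen, hfr,
          p.snd_mem_support_of_mem_edges he⟩⟩
  · rintro u hu w hw hne
    rcases hu with hu | hu
    · rcases hw with hw | hw
      · obtain ⟨r, hr, hx₀r, hre, hrs⟩ := hP.hpair u hu w hw hne
        exact ⟨r, hr, hx₀r, fun e he => Or.inl (hre e he),
          fun v hv => Or.inl (hrs v hv)⟩
      · obtain ⟨a, ha, b, hb, p, hpath, hlen, hfr, hws⟩ := hw
        have G1 := habs ha hb p hpath
        obtain ⟨r, hr, hx₀r, hre, hrs⟩ :=
          G1.hpair u (Or.inl hu) w (Or.inr hws) hne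
        refine ⟨r, hr, hx₀r, ?_, ?_⟩
        · rintro e he
          rcases hre e he with h | h
          · exact Or.inl h
          · exact Or.inr ⟨a, ha, b, hb, p, hpath, hlen, hfr, h⟩
        · rintro v hv
          rcases hrs v hv with h | h
          · exact Or.inl h
          · exact Or.inr ⟨a, ha, b, hb, p, hpath, hlen, hfr, h⟩
    · obtain ⟨a, ha, b, hb, p, hpath, hlen, hfr, hus⟩ := hu
      have G1 := habs ha hb p hpath
      rcases hw with hw | hw
      · obtain ⟨r, hr, hx₀r, hre, hrs⟩ :=
          G1.hpair u (Or.inr hus) w (Or.inl hw) hne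
        refine ⟨r, hr, hx₀r, ?_, ?_⟩
        · rintro e he
          rcases hre e he with h | h
          · exact Or.inl h
          · exact Or.inr ⟨a, ha, b, hb, p, hpath, hlen, hfr, h⟩
        · rintro v hv
          rcases hrs v hv with h | h
          · exact Or.inl h
          · exact Or.inr ⟨a, ha, b, hb, p, hpath, hlen, hfr, h⟩
      · obtain ⟨a', ha', b', hb', p', hpath', hlen', hfr', hws⟩ := hw
        have G2 := good_absorb hcyc p'.length
          (P.1 ∪ {v | v ∈ p.support}, P.2 ∪ {e | e ∈ p.edges}) p' le_rfl G1
          hpath' (Or.inl ha'.1) (Or.inl hb'.1)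
        obtain ⟨r, hr, hx₀r, hre, hrs⟩ :=
          G2.hpair u (Or.inl (Or.inr hus)) w (Or.inr hws) hne
        refine ⟨r, hr, hx₀r, ?_, ?_⟩
        · rintro e he
          rcases hre e he with (h | h) | h
          · exact Or.inl h
          · exact Or.inr ⟨a, ha, b, hb, p, hpath, hlen, hfr, h⟩
          · exact Or.inr ⟨a', ha', b', hb', p', hpath', hlen', hfr', h⟩
        · rintro v hv
          rcases hrs v hv with (h | h) | h
          · exact Or.inl h
          · exact Or.inr ⟨a, ha, b, hb, p, hpath, hlen, hfr, h⟩
          · exact Or.inr ⟨a', ha', b', hb', p', hpath', hlen', hfr', h⟩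
  · rintro v (hv | hv)
    · exact hP.hV hv
    · obtain ⟨a, ha, b, hb, p, hpath, hlen, hfr, hvs⟩ := hv
      exact (habs ha hb p hpath).hV (Or.inr hvs)
  · rintro e (he | he)
    · exact hP.hE he
    · obtain ⟨a, ha, b, hb, p, hpath, hlen, hfr, hes⟩ := he
      exact (habs ha hb p hpath).hE (Or.inr hes)

lemma good_iterate (hcyc : cyclesBounded G ℓ₀) {P : Set V × Set (Sym2 V)}
    (hP : Good G ℓ₀ x₀ P) (s n : ℕ) : Good G ℓ₀ x₀ ((wAdd G s)^[n] P) := by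
  induction n with
  | zero => exact hP
  | succ n ih =>
    rw [Function.iterate_succ_apply']
    exact good_wAdd hcyc ih s

end Final

/-- If every cycle of the finite connected graph `G` has length at most `ℓ₀`, then for
every vertex `x₀` and every `k ≥ 0`, the WZPZ `k`-neighborhood of `x₀` is contained in
the KCN `ℓ₀`-neighborhood of `x₀`. -/
theorem stmt_9 {V : Type} [Fintype V] (G : SimpleGraph V) (hconn : G.Connected)
    (ℓ₀ : ℕ) (hcyc : cyclesBounded G ℓ₀) (x₀ : V) (k : ℕ) :
    (wzpz G x₀ k).1 ⊆ kcnVerts G ℓ₀ x₀ ∧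
      (wzpz G x₀ k).2 ⊆ kcnEdges G ℓ₀ x₀ := by
  have hgood : Good G ℓ₀ x₀ (wzpz G x₀ k) := by
    induction k with
    | zero => exact good_base
    | succ s ih =>
      show Good G ℓ₀ x₀ (wSat G (s + 1) (wzpz G x₀ s))
      unfold wSat
      exact good_iterate hcyc ih (s + 1) _
  exact ⟨hgood.hV, hgood.hE⟩
end

section
/- Let G be a finite connected graph in which every cycle has length at most ℓ₀, and let x₀ be any vertex. Then the boundary of the WZPZ-neighborhood N^W_{ℓ₀−1}(x₀) admits no connecting outside path: for any two boundary vertices y, z of N^W_{ℓ₀−1}(x₀), there is no path from y to z using only edges outside N^W_{ℓ₀−1}(x₀) (i.e., d_{y,z}(∂N^W_{ℓ₀−1}) = ∞). Moreover, under these hypotheses N^K_{ℓ₀}(x₀) = N^W_{ℓ₀−1}(x₀). -/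
open SimpleGraph Walk

variable {V : Type} {G : SimpleGraph V}

/-- every vertex of a non-nil walk is an endpoint of one of its edges -/
lemma aux_vertEdge {a b : V} (p : G.Walk a b) (hnil : ¬ p.Nil) :
    ∀ v ∈ p.support, ∃ e ∈ p.edges, v ∈ e := by
  induction p with
  | nil => simp at hnil
  | cons h q ih =>
    intro v hv
    rename_i x y z
    rcases List.mem_cons.mp (by simpa using hv) with hv | hv
    · exact ⟨s(x,y), by simp, by simp [hv]⟩
    · by_cases hq : q.Nil
      · have : v = y := by
          cases q with
          | nil => simpa using hv
          | cons h' q' => simp at hq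
        exact ⟨s(x,y), by simp, by simp [this]⟩
      · obtain ⟨e, he, hve⟩ := ih hq v hv
        exact ⟨e, by simp [he], hve⟩

/-- first hit of a set along a walk, with append decomposition -/
lemma aux_firstHit {S : Set V} [DecidablePred (· ∈ S)] :
    ∀ {a b : V} (wk : G.Walk a b), b ∈ S →
      ∃ z, z ∈ S ∧ ∃ (B : G.Walk a z) (C : G.Walk z b), wk = B.append C ∧
        (∀ v ∈ B.support, v ∈ S → v = z) := by
  intro a b wk
  induction wk with
  | nil =>
    intro hb
    rename_i u
    exact ⟨u, hb, Walk.nil, Walk.nil, rfl, by simp +contextual⟩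
  | cons h q ih =>
    intro hb
    rename_i x y z
    by_cases hx : x ∈ S
    · exact ⟨x, hx, Walk.nil, Walk.cons h q, rfl, by simp⟩
    · obtain ⟨z', hz', B, C, hBC, hprop⟩ := ih hb
      refine ⟨z', hz', Walk.cons h B, C, by rw [hBC]; rfl, ?_⟩
      intro v hv hvS
      rcases List.mem_cons.mp (by simpa using hv) with rfl | hv
      · exact absurd hvS hx
      · exact hprop v hv hvS

lemma aux_mem_tail_of_mem {a z : V} (p : G.Walk a z) (v : V) (hv : v ∈ p.support)
    (hva : v ≠ a) : v ∈ p.support.tail := by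
  have := p.support_eq_cons
  rw [this] at hv
  rcases List.mem_cons.mp hv with rfl | h
  · exact absurd rfl hva
  · exact h

/-- the two arcs of a cycle determined by a vertex `z ≠ t` are paths -/
lemma aux_cycle_arcs [DecidableEq V] {t z : V} (c : G.Walk t t) (hc : c.IsCycle) (hz : z ∈ c.support)
    (hzt : z ≠ t) :
    (c.takeUntil z hz).IsPath ∧ (c.dropUntil z hz).IsPath ∧
    List.Disjoint (c.takeUntil z hz).support.tail (c.dropUntil z hz).support.tail := by
  set T := c.takeUntil z hz with hT
  set D := c.dropUntil z hz with hD
  have hspec : T.append D = c := c.take_spec hz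
  have hsupp : c.support = T.support ++ D.support.tail := by
    rw [← hspec, Walk.support_append]
  have htail : c.support.tail = T.support.tail ++ D.support.tail := by
    rw [← hspec, Walk.tail_support_append]
  have hnd : (T.support.tail ++ D.support.tail).Nodup := htail ▸ hc.2
  rw [List.nodup_append'] at hnd
  obtain ⟨h1, h2, hdisj⟩ := hnd
  have htz : t ∈ D.support.tail :=
    aux_mem_tail_of_mem D t D.end_mem_support (Ne.symm hzt)
  have hzT : z ∈ T.support.tail :=
    aux_mem_tail_of_mem T z T.end_mem_support hzt
  refine ⟨?_, ?_, hdisj⟩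
  · rw [Walk.isPath_def, T.support_eq_cons]
    exact List.nodup_cons.mpr ⟨fun h => hdisj h htz, h1⟩
  · rw [Walk.isPath_def, D.support_eq_cons]
    exact List.nodup_cons.mpr ⟨fun h => hdisj hzT h, h2⟩

lemma aux_closed_mem_tail {t : V} (c : G.Walk t t) (hnil : ¬ c.Nil) (v : V) :
    v ∈ c.support ↔ v ∈ c.support.tail := by
  constructor
  · intro hv
    by_cases hvt : v = t
    · subst hvt
      cases c with
      | nil => simp at hnil
      | cons h q => simpa using q.end_mem_support
    · exact aux_mem_tail_of_mem c v hv hvt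
  · intro hv
    rw [c.support_eq_cons]
    exact List.mem_cons_of_mem _ hv

lemma aux_rotate_mem_support [DecidableEq V] {t u : V} (c : G.Walk t t) (hc : ¬ c.Nil)
    (hu : u ∈ c.support) (v : V) :
    v ∈ (c.rotate _ hu).support ↔ v ∈ c.support := by
  have hnil' : ¬ (c.rotate _ hu).Nil := by
    intro h
    rw [Walk.nil_iff_length_eq] at h hc
    rw [Walk.rotate, Walk.length_append, add_comm, ← Walk.length_append, Walk.take_spec] at h
    exact hc h
  rw [aux_closed_mem_tail _ hnil', aux_closed_mem_tail _ hc]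
  exact (Walk.support_rotate c _ hu).mem_iff

lemma aux_rotate_mem_edges [DecidableEq V] {t u : V} (c : G.Walk t t) (hu : u ∈ c.support) (e : Sym2 V) :
    e ∈ (c.rotate _ hu).edges ↔ e ∈ c.edges :=
  (Walk.rotate_edges c _ hu).mem_iff

/-- arc of a cycle based at `x₀` from `z` to `u` passing through `x₀` -/
lemma aux_through_arc [DecidableEq V] {x₀ u z : V} (c : G.Walk x₀ x₀) (hc : c.IsCycle)
    (hu : u ∈ c.support) (hux : u ≠ x₀) (hz : z ∈ c.support) (hzu : z ≠ u) :
    ∃ R : G.Walk z u, R.IsPath ∧ x₀ ∈ R.support ∧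
      (∀ v ∈ R.support, v ∈ c.support) ∧ (∀ e ∈ R.edges, e ∈ c.edges) := by
  have hnil : ¬ c.Nil := hc.isCircuit.not_nil
  by_cases hzx : z = x₀
  · subst hzx
    obtain ⟨hT, -, -⟩ := aux_cycle_arcs c hc hu hux
    exact ⟨c.takeUntil u hu, hT, (c.takeUntil u hu).start_mem_support,
      fun v hv => c.support_takeUntil_subset hu hv,
      fun e he => c.edges_takeUntil_subset hu he⟩
  · set c₂ := c.rotate _ hu with hc₂
    have hc₂cyc : c₂.IsCycle := hc.rotate hu
    have hmems : ∀ v, v ∈ c₂.support ↔ v ∈ c.support :=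
      fun v => aux_rotate_mem_support c hnil hu v
    have hmeme : ∀ e, e ∈ c₂.edges ↔ e ∈ c.edges :=
      fun e => aux_rotate_mem_edges c hu e
    have hz₂ : z ∈ c₂.support := (hmems z).mpr hz
    obtain ⟨hTpath, hDpath, -⟩ := aux_cycle_arcs c₂ hc₂cyc hz₂ hzu
    set T := c₂.takeUntil z hz₂ with hT
    set D := c₂.dropUntil z hz₂ with hD
    have hx₂ : x₀ ∈ c₂.support := (hmems x₀).mpr c.start_mem_support
    have hx₂' : x₀ ∈ T.support ∨ x₀ ∈ D.support := by
      rw [← c₂.take_spec hz₂, Walk.mem_support_append_iff] at hx₂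
      exact hx₂
    rcases hx₂' with hx₂' | hx₂'
    · refine ⟨T.reverse, hTpath.reverse, by simp [Walk.support_reverse, hx₂'], ?_, ?_⟩
      · intro v hv
        rw [Walk.support_reverse, List.mem_reverse] at hv
        exact (hmems v).mp (c₂.support_takeUntil_subset hz₂ hv)
      · intro e he
        rw [Walk.edges_reverse, List.mem_reverse] at he
        exact (hmeme e).mp (c₂.edges_takeUntil_subset hz₂ he)
    · refine ⟨D, hDpath, hx₂', ?_, ?_⟩
      · exact fun v hv => (hmems v).mp (c₂.support_dropUntil_subset hz₂ hv)
      · exact fun e he => (hmeme e).mp (c₂.edges_dropUntil_subset hz₂ he)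

/-- invariant of the WZPZ construction -/
structure AuxGood (G : SimpleGraph V) (x₀ : V) (P : Set V × Set (Sym2 V)) : Prop where
  hx : x₀ ∈ P.1
  hnbr : ∀ a, G.Adj x₀ a → a ∈ P.1
  hinc : ∀ a, G.Adj x₀ a → s(x₀, a) ∈ P.2
  hedge : ∀ e ∈ P.2, ∃ v w, e = s(v, w) ∧ G.Adj v w ∧ v ∈ P.1 ∧ w ∈ P.1
  hwalk : ∀ v ∈ P.1, ∃ r : G.Walk x₀ v, (∀ u ∈ r.support, u ∈ P.1) ∧ (∀ e ∈ r.edges, e ∈ P.2)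
  hcyc : ∀ v ∈ P.1, v = x₀ ∨ G.Adj x₀ v ∨ ∃ (t : V) (c : G.Walk t t), c.IsCycle ∧
    x₀ ∈ c.support ∧ v ∈ c.support ∧ (∀ u ∈ c.support, u ∈ P.1) ∧ (∀ e ∈ c.edges, e ∈ P.2)
  hecyc : ∀ e ∈ P.2, (∃ a, G.Adj x₀ a ∧ e = s(x₀, a)) ∨ ∃ (t : V) (c : G.Walk t t),
    c.IsCycle ∧ x₀ ∈ c.support ∧ e ∈ c.edges ∧ (∀ u ∈ c.support, u ∈ P.1) ∧
    (∀ e' ∈ c.edges, e' ∈ P.2)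

lemma AuxGood.vert_of_edge {x₀ : V} {P : Set V × Set (Sym2 V)} (hG : AuxGood G x₀ P)
    {e : Sym2 V} (he : e ∈ P.2) {v : V} (hv : v ∈ e) : v ∈ P.1 := by
  obtain ⟨a, b, rfl, -, ha, hb⟩ := hG.hedge e he
  rcases Sym2.mem_iff.mp hv with rfl | rfl <;> assumption

lemma aux_start_not_mem_tail {a b : V} (p : G.Walk a b) (hp : p.IsPath) :
    a ∉ p.support.tail := by
  have h := hp.support_nodup
  rw [p.support_eq_cons] at h
  exact (List.nodup_cons.mp h).1

/-- main construction: a cycle through `x₀` containing a given outside path, assuming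
`u` lies on an inside cycle through `x₀` -/
lemma aux_crux_main [DecidableEq V] {x₀ u w : V} {P : Set V × Set (Sym2 V)}
    (hG : AuxGood G x₀ P)
    (hu : u ∈ P.1) (hw : w ∈ P.1) (hux : u ≠ x₀) (hwx : w ≠ x₀) (huw : u ≠ w)
    (p : G.Walk u w) (hp : p.IsPath)
    (hint : ∀ v ∈ p.support, v ≠ u → v ≠ w → v ∉ P.1)
    (hpe : ∀ e ∈ p.edges, e ∉ P.2)
    {t₀ : V} (c₀ : G.Walk t₀ t₀) (hc₀ : c₀.IsCycle) (hx₀c : x₀ ∈ c₀.support)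
    (huc : u ∈ c₀.support) (hc₀P1 : ∀ v ∈ c₀.support, v ∈ P.1)
    (hc₀P2 : ∀ e ∈ c₀.edges, e ∈ P.2) :
    ∃ (t : V) (c : G.Walk t t), c.IsCycle ∧ x₀ ∈ c.support ∧
      (∀ v ∈ c.support, v ∈ P.1 ∨ v ∈ p.support) ∧
      (∀ e ∈ c.edges, e ∈ P.2 ∨ e ∈ p.edges) ∧
      (∀ v ∈ p.support, v ∈ c.support) ∧ (∀ e ∈ p.edges, e ∈ c.edges) := by
  classical
  have hnil₀ : ¬ c₀.Nil := hc₀.isCircuit.not_nil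
  -- rotate the `u`-cycle to be based at `x₀`
  set cU := c₀.rotate _ hx₀c with hcU
  have hcUcyc : cU.IsCycle := hc₀.rotate hx₀c
  have hmemsU : ∀ v, v ∈ cU.support ↔ v ∈ c₀.support :=
    fun v => aux_rotate_mem_support c₀ hnil₀ hx₀c v
  have hmemeU : ∀ e, e ∈ cU.edges ↔ e ∈ c₀.edges :=
    fun e => aux_rotate_mem_edges c₀ hx₀c e
  have hUP1 : ∀ v ∈ cU.support, v ∈ P.1 := fun v hv => hc₀P1 v ((hmemsU v).mp hv)
  have hUP2 : ∀ e ∈ cU.edges, e ∈ P.2 := fun e he => hc₀P2 e ((hmemeU e).mp he)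
  have huU : u ∈ cU.support := (hmemsU u).mpr huc
  have hx₀p : x₀ ∉ p.support := by
    intro h
    exact hint x₀ h (Ne.symm hux) (Ne.symm hwx) hG.hx
  -- find an escape path from w to the u-cycle
  have hescape : ∃ z, z ∈ cU.support ∧ z ≠ u ∧ ∃ B : G.Walk w z, B.IsPath ∧
      (∀ v ∈ B.support, v ∈ P.1) ∧ (∀ e ∈ B.edges, e ∈ P.2) ∧
      (∀ v ∈ B.support, v ∈ cU.support → v = z) ∧ (w ∈ cU.support → z = w) := by
    by_cases hwS : w ∈ cU.support
    · exact ⟨w, hwS, Ne.symm huw, Walk.nil, by simp, by simpa using hw, by simp,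
        by simp +contextual, fun _ => rfl⟩
    · -- get an inside path from w to x₀
      have hB₀ : ∃ B₀ : G.Walk w x₀, B₀.IsPath ∧ (∀ v ∈ B₀.support, v ∈ P.1) ∧
          (∀ e ∈ B₀.edges, e ∈ P.2) ∧ (∀ z', z' ∈ B₀.support → z' ∈ cU.support → z' ≠ u) := by
        rcases hG.hcyc w hw with rfl | hadj | ⟨t₁, c₁, hc₁, hx₁, hw₁, hP1₁, hP2₁⟩
        · exact absurd rfl hwx
        · refine ⟨Walk.cons hadj.symm Walk.nil, ?_, ?_, ?_, ?_⟩
          · rw [Walk.cons_isPath_iff]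
            exact ⟨Walk.IsPath.nil, by simpa using hwx⟩
          · intro v hv
            rcases (by simpa using hv : v = w ∨ v = x₀) with rfl | rfl
            · exact hw
            · exact hG.hx
          · intro e he
            have : e = s(w, x₀) := by simpa using he
            subst this
            rw [Sym2.eq_swap]
            exact hG.hinc w hadj
          · intro z' hz' _
            rcases (by simpa using hz' : z' = w ∨ z' = x₀) with h | h
            · simpa [h] using Ne.symm huw
            · simpa [h] using Ne.symm hux
        · -- rotate w-cycle to w; two arcs to x₀; at most one contains u
          have hnil₁ : ¬ c₁.Nil := hc₁.isCircuit.not_nil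
          set cW := c₁.rotate _ hw₁ with hcW
          have hcWcyc : cW.IsCycle := hc₁.rotate hw₁
          have hmemsW : ∀ v, v ∈ cW.support ↔ v ∈ c₁.support :=
            fun v => aux_rotate_mem_support c₁ hnil₁ hw₁ v
          have hx₀W : x₀ ∈ cW.support := (hmemsW x₀).mpr hx₁
          obtain ⟨hA₁, hDpath, hdisj⟩ := aux_cycle_arcs cW hcWcyc hx₀W (Ne.symm hwx)
          set A₁ := cW.takeUntil x₀ hx₀W with hA₁def
          set D := cW.dropUntil x₀ hx₀W with hDdef
          by_cases huA₁ : u ∈ A₁.support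
          · -- use the other arc D.reverse
            refine ⟨D.reverse, hDpath.reverse, ?_, ?_, ?_⟩
            · intro v hv
              rw [Walk.support_reverse, List.mem_reverse] at hv
              exact hP1₁ v ((hmemsW v).mp (cW.support_dropUntil_subset hx₀W hv))
            · intro e he
              rw [Walk.edges_reverse, List.mem_reverse] at he
              exact hP2₁ e ((aux_rotate_mem_edges c₁ hw₁ e).mp
                (cW.edges_dropUntil_subset hx₀W he))
            · intro z' hz' _
              rw [Walk.support_reverse, List.mem_reverse] at hz'
              intro hz'u
              subst hz'u
              have h1 : z' ∈ A₁.support.tail :=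
                aux_mem_tail_of_mem A₁ z' huA₁ huw
              have h2 : z' ∈ D.support.tail :=
                aux_mem_tail_of_mem D z' hz' hux
              exact hdisj h1 h2
          · refine ⟨A₁, hA₁, ?_, ?_, ?_⟩
            · intro v hv
              exact hP1₁ v ((hmemsW v).mp (cW.support_takeUntil_subset hx₀W hv))
            · intro e he
              exact hP2₁ e ((aux_rotate_mem_edges c₁ hw₁ e).mp
                (cW.edges_takeUntil_subset hx₀W he))
            · intro z' hz' _ hz'u
              subst hz'u
              exact huA₁ hz'
      obtain ⟨B₀, hB₀path, hB₀P1, hB₀P2, hB₀u⟩ := hB₀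
      obtain ⟨z, hzS, B, C, hdec, hprop⟩ :=
        aux_firstHit (S := {v | v ∈ cU.support}) B₀ cU.start_mem_support
      have hBsub : B.support ⊆ B₀.support := by
        rw [hdec, Walk.support_append]
        exact List.subset_append_left _ _
      have hBesub : B.edges ⊆ B₀.edges := by
        rw [hdec, Walk.edges_append]
        exact List.subset_append_left _ _
      refine ⟨z, hzS, hB₀u z (hBsub B.end_mem_support) hzS, B, ?_, ?_, ?_, hprop, ?_⟩
      · rw [hdec] at hB₀path
        exact hB₀path.of_append_left
      · exact fun v hv => hB₀P1 v (hBsub hv)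
      · exact fun e he => hB₀P2 e (hBesub he)
      · intro hwS'
        exact absurd hwS' hwS
  obtain ⟨z, hzS, hzu, B, hBpath, hBP1, hBP2, hBonly, hwzS⟩ := hescape
  obtain ⟨R, hRpath, hx₀R, hRS, hRE⟩ := aux_through_arc cU hcUcyc huU hux hzS hzu
  have hRP1 : ∀ v ∈ R.support, v ∈ P.1 := fun v hv => hUP1 v (hRS v hv)
  have hRP2 : ∀ e ∈ R.edges, e ∈ P.2 := fun e he => hUP2 e (hRE e he)
  set K := p.append (B.append R) with hK
  have hKs : K.support.tail = p.support.tail ++ (B.support.tail ++ R.support.tail) := by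
    rw [hK, Walk.tail_support_append, Walk.tail_support_append]
  have hKe : K.edges = p.edges ++ (B.edges ++ R.edges) := by
    rw [hK, Walk.edges_append, Walk.edges_append]
  have hpu : u ∉ p.support.tail := aux_start_not_mem_tail p hp
  have hwB : w ∉ B.support.tail := aux_start_not_mem_tail B hBpath
  have hzR : z ∉ R.support.tail := aux_start_not_mem_tail R hRpath
  have hptP : ∀ v ∈ p.support.tail, v = w ∨ v ∉ P.1 := by
    intro v hv
    by_cases hvw : v = w
    · exact Or.inl hvw
    · exact Or.inr (hint v (List.mem_of_mem_tail hv) (fun h => hpu (h ▸ hv)) hvw)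
  have hKcyc : K.IsCycle := by
    rw [Walk.isCycle_def]
    refine ⟨⟨?_⟩, ?_, ?_⟩
    · -- edges nodup
      rw [hKe]
      rw [List.nodup_append']
      refine ⟨hp.isTrail.edges_nodup, ?_, ?_⟩
      · rw [List.nodup_append']
        refine ⟨hBpath.isTrail.edges_nodup, hRpath.isTrail.edges_nodup, ?_⟩
        · intro e heB heR
          induction e using Sym2.ind with
          | _ a b =>
            have ha : a = z := hBonly a (B.fst_mem_support_of_mem_edges heB)
              (hRS a (R.fst_mem_support_of_mem_edges heR))
            have hb : b = z := hBonly b (B.snd_mem_support_of_mem_edges heB)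
              (hRS b (R.snd_mem_support_of_mem_edges heR))
            have : G.Adj a b := B.adj_of_mem_edges heB
            rw [ha, hb] at this
            exact G.irrefl this
      · intro e hep he'
        have : e ∈ P.2 := by
          rcases List.mem_append.mp he' with h | h
          · exact hBP2 e h
          · exact hRP2 e h
        exact hpe e hep this
    · -- K ≠ nil
      intro h
      have := congrArg Walk.length h
      rw [hK, Walk.length_append] at this
      simp only [Walk.length_nil] at this
      exact huw (Walk.eq_of_length_eq_zero (Nat.eq_zero_of_add_eq_zero_right this))
    · -- support tail nodup
      rw [hKs, List.nodup_append']
      refine ⟨hp.support_nodup.tail, ?_, ?_⟩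
      · rw [List.nodup_append']
        refine ⟨hBpath.support_nodup.tail, hRpath.support_nodup.tail, ?_⟩
        intro v hvB hvR
        have : v = z := hBonly v (List.mem_of_mem_tail hvB)
          (hRS v (List.mem_of_mem_tail hvR))
        subst this
        exact hzR hvR
      · intro v hvp hv'
        rcases hptP v hvp with rfl | hvP
        · rcases List.mem_append.mp hv' with h | h
          · exact hwB h
          · rcases hwzS (hRS v (List.mem_of_mem_tail h)) with rfl
            exact hzR h
        · rcases List.mem_append.mp hv' with h | h
          · exact hvP (hBP1 v (List.mem_of_mem_tail h))
          · exact hvP (hRP1 v (List.mem_of_mem_tail h))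
  refine ⟨u, K, hKcyc, ?_, ?_, ?_, ?_, ?_⟩
  · rw [hK, Walk.mem_support_append_iff, Walk.mem_support_append_iff]
    exact Or.inr (Or.inr hx₀R)
  · intro v hv
    rw [hK, Walk.mem_support_append_iff, Walk.mem_support_append_iff] at hv
    rcases hv with h | h | h
    · exact Or.inr h
    · exact Or.inl (hBP1 v h)
    · exact Or.inl (hRP1 v h)
  · intro e he
    rw [hKe] at he
    rcases List.mem_append.mp he with h | h
    · exact Or.inr h
    · rcases List.mem_append.mp h with h | h
      · exact Or.inl (hBP2 e h)
      · exact Or.inl (hRP2 e h)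
  · intro v hv
    rw [hK, Walk.mem_support_append_iff]
    exact Or.inl hv
  · intro e he
    rw [hKe]
    exact List.mem_append_left _ he

/-- any outside path between two inside vertices (internally outside) lies on a cycle
through `x₀` whose remaining parts are inside -/
lemma aux_crux [DecidableEq V] {x₀ u w : V} {P : Set V × Set (Sym2 V)}
    (hG : AuxGood G x₀ P)
    (hu : u ∈ P.1) (hw : w ∈ P.1) (hux : u ≠ x₀) (hwx : w ≠ x₀) (huw : u ≠ w)
    (p : G.Walk u w) (hp : p.IsPath)
    (hint : ∀ v ∈ p.support, v ≠ u → v ≠ w → v ∉ P.1)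
    (hpe : ∀ e ∈ p.edges, e ∉ P.2) :
    ∃ (t : V) (c : G.Walk t t), c.IsCycle ∧ x₀ ∈ c.support ∧
      (∀ v ∈ c.support, v ∈ P.1 ∨ v ∈ p.support) ∧
      (∀ e ∈ c.edges, e ∈ P.2 ∨ e ∈ p.edges) ∧
      (∀ v ∈ p.support, v ∈ c.support) ∧ (∀ e ∈ p.edges, e ∈ c.edges) := by
  have hx₀p : x₀ ∉ p.support := fun h => hint x₀ h (Ne.symm hux) (Ne.symm hwx) hG.hx
  rcases hG.hcyc u hu with rfl | hadju | ⟨t₀, c₀, hc₀, hx₀c, huc, hP1, hP2⟩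
  · exact absurd rfl hux
  · rcases hG.hcyc w hw with rfl | hadjw | ⟨t₀, c₀, hc₀, hx₀c, hwc, hP1, hP2⟩
    · exact absurd rfl hwx
    · -- both adjacent to x₀ : direct cycle
      set K := Walk.cons hadju (p.append (Walk.cons hadjw.symm Walk.nil)) with hKdef
      have hKs : K.support = x₀ :: (p.support ++ [x₀]) := by
        rw [hKdef]
        simp [Walk.support_append]
      have hKe : K.edges = s(x₀, u) :: (p.edges ++ [s(w, x₀)]) := by
        rw [hKdef]
        simp [Walk.edges_append]
      have hwx₀p : s(w, x₀) ∉ p.edges := fun h => hx₀p (p.snd_mem_support_of_mem_edges h)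
      have hKcyc : K.IsCycle := by
        rw [Walk.isCycle_def]
        refine ⟨⟨?_⟩, by simp [hKdef], ?_⟩
        · rw [hKe]
          refine List.nodup_cons.mpr ⟨?_, ?_⟩
          · intro h
            rcases List.mem_append.mp h with h | h
            · exact hx₀p (p.fst_mem_support_of_mem_edges h)
            · rw [List.mem_singleton, Sym2.eq_iff] at h
              rcases h with ⟨h1, -⟩ | ⟨-, h2⟩
              · exact hwx h1.symm
              · exact huw h2
          · rw [List.nodup_append']
            exact ⟨hp.isTrail.edges_nodup, List.nodup_singleton _,
              fun e he h => by
                rw [List.mem_singleton] at h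
                exact hwx₀p (h ▸ he)⟩
        · rw [hKs]
          simp only [List.tail_cons]
          rw [List.nodup_append']
          exact ⟨hp.support_nodup, List.nodup_singleton _,
            fun v hv h => by
              rw [List.mem_singleton] at h
              exact hx₀p (h ▸ hv)⟩
      refine ⟨x₀, K, hKcyc, by rw [hKs]; exact List.mem_cons_self, ?_, ?_, ?_, ?_⟩
      · intro v hv
        rw [hKs] at hv
        rcases List.mem_cons.mp hv with rfl | hv
        · exact Or.inl hG.hx
        · rcases List.mem_append.mp hv with h | h
          · exact Or.inr h
          · rw [List.mem_singleton] at h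
            exact Or.inl (h ▸ hG.hx)
      · intro e he
        rw [hKe] at he
        rcases List.mem_cons.mp he with rfl | he
        · exact Or.inl (hG.hinc u hadju)
        · rcases List.mem_append.mp he with h | h
          · exact Or.inr h
          · rw [List.mem_singleton] at h
            subst h
            exact Or.inl (Sym2.eq_swap ▸ hG.hinc w hadjw)
      · intro v hv
        rw [hKs]
        exact List.mem_cons_of_mem _ (List.mem_append_left _ hv)
      · intro e he
        rw [hKe]
        exact List.mem_cons_of_mem _ (List.mem_append_left _ he)
    · -- w has a cycle witness : apply main lemma to the reversed path
      obtain ⟨t, c, hc, hx₀K, hcov1, hcov2, hsub1, hsub2⟩ :=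
        aux_crux_main hG hw hu hwx hux (Ne.symm huw) p.reverse hp.reverse
          (by
            intro v hv h1 h2
            rw [Walk.support_reverse, List.mem_reverse] at hv
            exact hint v hv h2 h1)
          (by
            intro e he
            rw [Walk.edges_reverse, List.mem_reverse] at he
            exact hpe e he)
          c₀ hc₀ hx₀c hwc hP1 hP2
      refine ⟨t, c, hc, hx₀K, ?_, ?_, ?_, ?_⟩
      · intro v hv
        rcases hcov1 v hv with h | h
        · exact Or.inl h
        · rw [Walk.support_reverse, List.mem_reverse] at h
          exact Or.inr h
      · intro e he
        rcases hcov2 e he with h | h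
        · exact Or.inl h
        · rw [Walk.edges_reverse, List.mem_reverse] at h
          exact Or.inr h
      · intro v hv
        exact hsub1 v (by rw [Walk.support_reverse, List.mem_reverse]; exact hv)
      · intro e he
        exact hsub2 e (by rw [Walk.edges_reverse, List.mem_reverse]; exact he)
  · exact aux_crux_main hG hu hw hux hwx huw p hp hint hpe c₀ hc₀ hx₀c huc hP1 hP2

/-- decomposition: every outside edge of a path between inside vertices lies on a
maximal outside segment between two inside vertices -/
lemma aux_seg {x₀ : V} {P : Set V × Set (Sym2 V)} (hG : AuxGood G x₀ P) :
    ∀ (n : ℕ) {a b : V} (p : G.Walk a b), p.length ≤ n → p.IsPath → a ∈ P.1 → b ∈ P.1 →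
    ∀ e ∈ p.edges, e ∉ P.2 →
    ∃ (u w : V) (q : G.Walk u w), u ≠ w ∧ u ∈ P.1 ∧ w ∈ P.1 ∧ q.IsPath ∧
      (∀ x ∈ q.support, x ≠ u → x ≠ w → x ∉ P.1) ∧ (∀ e' ∈ q.edges, e' ∉ P.2) ∧
      e ∈ q.edges ∧ (∀ v ∈ q.support, v ∈ p.support) ∧ (∀ e' ∈ q.edges, e' ∈ p.edges) := by
  classical
  intro n
  induction n with
  | zero =>
    intro a b p hlen hp ha hb e he heP
    cases p with
    | nil => simp at he
    | cons h q => simp at hlen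
  | succ n ih =>
    intro a b p hlen hp ha hb e he heP
    cases p with
    | nil => simp at he
    | cons h q =>
      rename_i a'
      have hqlen : q.length ≤ n := by
        simpa using hlen
      have hqpath : q.IsPath := hp.of_cons
      have hanq : a ∉ q.support := ((Walk.cons_isPath_iff h q).mp hp).2
      by_cases ha' : a' ∈ P.1
      · rcases List.mem_cons.mp (by simpa using he) with rfl | heq
        · -- the edge is the first edge, forming its own segment
          refine ⟨a, a', Walk.cons h Walk.nil, h.ne, ha, ha', ?_, ?_, ?_, by simp, ?_, ?_⟩
          · rw [Walk.cons_isPath_iff]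
            exact ⟨Walk.IsPath.nil, by simpa using h.ne⟩
          · intro x hx hxa hxa'
            rcases (by simpa using hx : x = a ∨ x = a') with rfl | rfl
            · exact absurd rfl hxa
            · exact absurd rfl hxa'
          · intro e' he'
            have : e' = s(a, a') := by simpa using he'
            subst this
            exact heP
          · intro v hv
            rcases (by simpa using hv : v = a ∨ v = a') with rfl | rfl
            · exact Walk.start_mem_support _
            · simp
          · intro e' he'
            have : e' = s(a, a') := by simpa using he'
            subst this
            simp
        · obtain ⟨u', w', q', h1, h2, h3, h4, h5, h6, h7, h8, h9⟩ :=
            ih q hqlen hqpath ha' hb e heq heP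
          exact ⟨u', w', q', h1, h2, h3, h4, h5, h6, h7,
            fun v hv => by simp [h8 v hv],
            fun e' he' => by simp [h9 e' he']⟩
      · -- the path leaves P at once; find the first return
        obtain ⟨z, hzP, B, C, hdec, hprop⟩ :=
          aux_firstHit (S := P.1) q hb
        have hBpath : B.IsPath := by
          rw [hdec] at hqpath
          exact hqpath.of_append_left
        have hBsup : B.support ⊆ q.support := by
          rw [hdec, Walk.support_append]
          exact List.subset_append_left _ _
        have haz : a ≠ z := by
          intro haz
          subst haz
          exact hanq (hBsup B.end_mem_support)
        have hBedg : B.edges ⊆ q.edges := by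
          rw [hdec, Walk.edges_append]
          exact List.subset_append_left _ _
        have hBout : ∀ e' ∈ B.edges, e' ∉ P.2 := by
          intro e' he' he'P
          induction e' using Sym2.ind with
          | _ v1 v2 =>
            have h1 : v1 = z := hprop v1 (B.fst_mem_support_of_mem_edges he')
              (hG.vert_of_edge he'P (Sym2.mem_mk_left _ _))
            have h2 : v2 = z := hprop v2 (B.snd_mem_support_of_mem_edges he')
              (hG.vert_of_edge he'P (Sym2.mem_mk_right _ _))
            exact G.irrefl (h1 ▸ h2 ▸ B.adj_of_mem_edges he')
        have hfirst : e = s(a, a') ∨ e ∈ B.edges ∨ e ∈ C.edges := by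
          rcases List.mem_cons.mp (by simpa using he) with h | h
          · exact Or.inl h
          · rw [hdec, Walk.edges_append] at h
            rcases List.mem_append.mp h with h | h
            · exact Or.inr (Or.inl h)
            · exact Or.inr (Or.inr h)
        rcases hfirst with hfe | hfe | hfe
        · -- e is the first edge or on B : segment is `cons h B`
          refine ⟨a, z, Walk.cons h B, haz, ha, hzP, ?_, ?_, ?_, by simp [hfe], ?_, ?_⟩
          · rw [Walk.cons_isPath_iff]
            exact ⟨hBpath, fun hc => hanq (hBsup hc)⟩
          · intro x hx hxa hxz
            rcases List.mem_cons.mp (by simpa using hx) with rfl | hx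
            · exact absurd rfl hxa
            · exact fun hxP => hxz (hprop x hx hxP)
          · intro e' he'
            rcases List.mem_cons.mp (by simpa using he') with rfl | he'
            · intro hP2
              exact ha' (hG.vert_of_edge hP2 (Sym2.mem_mk_right _ _))
            · exact hBout e' he'
          · intro v hv
            rcases List.mem_cons.mp (by simpa using hv) with rfl | hv
            · exact Walk.start_mem_support _
            · exact List.mem_cons_of_mem _ (hBsup hv)
          · intro e' he'
            rcases List.mem_cons.mp (by simpa using he') with rfl | he'
            · simp
            · exact List.mem_cons_of_mem _ (hBedg he')
        · refine ⟨a, z, Walk.cons h B, haz, ha, hzP, ?_, ?_, ?_, ?_, ?_, ?_⟩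
          · rw [Walk.cons_isPath_iff]
            exact ⟨hBpath, fun hc => hanq (hBsup hc)⟩
          · intro x hx hxa hxz
            rcases List.mem_cons.mp (by simpa using hx) with rfl | hx
            · exact absurd rfl hxa
            · exact fun hxP => hxz (hprop x hx hxP)
          · intro e' he'
            rcases List.mem_cons.mp (by simpa using he') with rfl | he'
            · intro hP2
              exact ha' (hG.vert_of_edge hP2 (Sym2.mem_mk_right _ _))
            · exact hBout e' he'
          · simp only [Walk.edges_cons]
            exact List.mem_cons_of_mem _ hfe
          · intro v hv
            rcases List.mem_cons.mp (by simpa using hv) with rfl | hv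
            · exact Walk.start_mem_support _
            · exact List.mem_cons_of_mem _ (hBsup hv)
          · intro e' he'
            rcases List.mem_cons.mp (by simpa using he') with rfl | he'
            · simp
            · exact List.mem_cons_of_mem _ (hBedg he')
        · -- e is beyond the first return : recurse on C
          have hClen : C.length ≤ n := by
            have : q.length = B.length + C.length := by
              rw [hdec, Walk.length_append]
            omega
          have hCpath : C.IsPath := by
            rw [hdec] at hqpath
            exact hqpath.of_append_right
          obtain ⟨u', w', q', h1, h2, h3, h4, h5, h6, h7, h8, h9⟩ :=
            ih C hClen hCpath hzP hb e hfe heP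
          have hCsup : C.support ⊆ q.support := by
            rw [hdec]
            intro v hv
            rw [Walk.mem_support_append_iff]
            exact Or.inr hv
          have hCedg : C.edges ⊆ q.edges := by
            rw [hdec, Walk.edges_append]
            exact List.subset_append_right _ _
          exact ⟨u', w', q', h1, h2, h3, h4, h5, h6, h7,
            fun v hv => List.mem_cons_of_mem _ (hCsup (h8 v hv)),
            fun e' he' => by
              simp only [Walk.edges_cons]
              exact List.mem_cons_of_mem _ (hCedg (h9 e' he'))⟩

lemma aux_bdry_of_edge {x₀ : V} {P : Set V × Set (Sym2 V)} (hG : AuxGood G x₀ P)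
    {v : V} (hv : v ∈ P.1) {e : Sym2 V} (heG : e ∈ G.edgeSet) (heP : e ∉ P.2)
    (hve : v ∈ e) : v ∈ wBdry G P := by
  induction e using Sym2.ind with
  | _ a b =>
    rcases Sym2.mem_iff.mp hve with rfl | rfl
    · exact ⟨hv, b, heG, heP⟩
    · exact ⟨hv, a, (heG : G.Adj a v).symm, fun h => heP (Sym2.eq_swap ▸ h)⟩

lemma aux_ne_x₀_of_edge {x₀ : V} {P : Set V × Set (Sym2 V)} (hG : AuxGood G x₀ P)
    {e : Sym2 V} (heG : e ∈ G.edgeSet) (heP : e ∉ P.2) (hx : x₀ ∈ e) : False := by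
  induction e using Sym2.ind with
  | _ a b =>
    rcases Sym2.mem_iff.mp hx with rfl | rfl
    · exact heP (hG.hinc b heG)
    · exact heP (Sym2.eq_swap ▸ hG.hinc a (heG : G.Adj a x₀).symm)

/-- the invariant is preserved by one step of the construction -/
lemma aux_good_wAdd [DecidableEq V] {x₀ : V} {P : Set V × Set (Sym2 V)}
    (hG : AuxGood G x₀ P) (s : ℕ) : AuxGood G x₀ (wAdd G s P) := by
  classical
  set P' := wAdd G s P with hP'
  have hsub1 : P.1 ⊆ P'.1 := Set.subset_union_left
  have hsub2 : P.2 ⊆ P'.2 := Set.subset_union_left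
  -- every added path is wholly contained in P'
  have haddv : ∀ {a b : V}, a ∈ wBdry G P → b ∈ wBdry G P → ∀ (p : G.Walk a b),
      p.IsPath → p.length ≤ s → (∀ e ∈ p.edges, e ∉ P.2) →
      (∀ v ∈ p.support, v ∈ P'.1) ∧ (∀ e ∈ p.edges, e ∈ P'.2) := by
    intro a b ha hb p hp hlen hout
    constructor
    · intro v hv
      exact Or.inr ⟨a, ha, b, hb, p, hp, hlen, hout, hv⟩
    · intro e he
      exact Or.inr ⟨a, ha, b, hb, p, hp, hlen, hout, he⟩
  -- every genuinely new vertex or edge lies on a cycle through x₀ inside P'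
  have hkey : ∀ {a b : V}, a ∈ wBdry G P → b ∈ wBdry G P → ∀ (p : G.Walk a b),
      p.IsPath → p.length ≤ s → (∀ e ∈ p.edges, e ∉ P.2) →
      ∀ e₀ ∈ p.edges, e₀ ∉ P.2 →
      ∃ (t : V) (c : G.Walk t t), c.IsCycle ∧ x₀ ∈ c.support ∧ e₀ ∈ c.edges ∧
        (∀ u ∈ c.support, u ∈ P'.1) ∧ (∀ e' ∈ c.edges, e' ∈ P'.2) := by
    intro a b ha hb p hp hlen hout e₀ he₀ he₀P
    obtain ⟨u', w', q, h1, h2, h3, h4, h5, h6, h7, h8, h9⟩ :=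
      aux_seg hG p.length p le_rfl hp ha.1 hb.1 e₀ he₀ he₀P
    have hqnil : ¬ q.Nil := by
      intro hnil
      rw [Walk.nil_iff_length_eq] at hnil
      exact h1 (Walk.eq_of_length_eq_zero hnil)
    have hune : u' ≠ x₀ := by
      intro h
      subst h
      obtain ⟨e', he', hue'⟩ := aux_vertEdge q hqnil u' q.start_mem_support
      exact aux_ne_x₀_of_edge hG (q.edges_subset_edgeSet he') (h6 e' he') hue'
    have hwne : w' ≠ x₀ := by
      intro h
      subst h
      obtain ⟨e', he', hue'⟩ := aux_vertEdge q hqnil w' q.end_mem_support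
      exact aux_ne_x₀_of_edge hG (q.edges_subset_edgeSet he') (h6 e' he') hue'
    obtain ⟨t, c, hc, hx₀c, hcov1, hcov2, hsubs, hsube⟩ :=
      aux_crux hG h2 h3 hune hwne h1 q h4 h5 h6
    refine ⟨t, c, hc, hx₀c, hsube e₀ h7, ?_, ?_⟩
    · intro v hv
      rcases hcov1 v hv with h | h
      · exact hsub1 h
      · exact (haddv ha hb p hp hlen hout).1 v (h8 v h)
    · intro e' he'
      rcases hcov2 e' he' with h | h
      · exact hsub2 h
      · exact (haddv ha hb p hp hlen hout).2 e' (h9 e' h)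
  refine ⟨hsub1 hG.hx, fun a h => hsub1 (hG.hnbr a h), fun a h => hsub2 (hG.hinc a h),
    ?_, ?_, ?_, ?_⟩
  · -- hedge
    intro e he
    rcases he with he | ⟨a, ha, b, hb, p, hp, hlen, hout, he⟩
    · obtain ⟨v', w', rfl, hadj, h1, h2⟩ := hG.hedge e he
      exact ⟨v', w', rfl, hadj, hsub1 h1, hsub1 h2⟩
    · induction e using Sym2.ind with
      | _ v' w' =>
        exact ⟨v', w', rfl, p.adj_of_mem_edges he,
          (haddv ha hb p hp hlen hout).1 v' (p.fst_mem_support_of_mem_edges he),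
          (haddv ha hb p hp hlen hout).1 w' (p.snd_mem_support_of_mem_edges he)⟩
  · -- hwalk
    intro v hv
    rcases hv with hv | ⟨a, ha, b, hb, p, hp, hlen, hout, hv⟩
    · obtain ⟨r, hr1, hr2⟩ := hG.hwalk v hv
      exact ⟨r, fun u hu => hsub1 (hr1 u hu), fun e he => hsub2 (hr2 e he)⟩
    · obtain ⟨r, hr1, hr2⟩ := hG.hwalk a ha.1
      refine ⟨r.append (p.takeUntil v hv), ?_, ?_⟩
      · intro u hu
        rw [Walk.mem_support_append_iff] at hu
        rcases hu with hu | hu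
        · exact hsub1 (hr1 u hu)
        · exact (haddv ha hb p hp hlen hout).1 u (p.support_takeUntil_subset hv hu)
      · intro e he
        rw [Walk.edges_append] at he
        rcases List.mem_append.mp he with he | he
        · exact hsub2 (hr2 e he)
        · exact (haddv ha hb p hp hlen hout).2 e (p.edges_takeUntil_subset hv he)
  · -- hcyc
    intro v hv
    by_cases hvP : v ∈ P.1
    · rcases hG.hcyc v hvP with h | h | ⟨t, c, hc, h1, h2, h3, h4⟩
      · exact Or.inl h
      · exact Or.inr (Or.inl h)
      · exact Or.inr (Or.inr ⟨t, c, hc, h1, h2, fun u hu => hsub1 (h3 u hu),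
          fun e he => hsub2 (h4 e he)⟩)
    · rcases hv with hv | ⟨a, ha, b, hb, p, hp, hlen, hout, hv⟩
      · exact absurd hv hvP
      · have hpnil : ¬ p.Nil := by
          intro hnil
          cases p with
          | nil =>
            have hva : v = a := by simpa using hv
            exact hvP (hva ▸ ha.1)
          | cons h q => simp at hnil
        obtain ⟨e₀, he₀, hve₀⟩ := aux_vertEdge p hpnil v hv
        obtain ⟨t, c, hc, hx₀c, he₀c, hcP1, hcP2⟩ :=
          hkey ha hb p hp hlen hout e₀ he₀ (hout e₀ he₀)
        refine Or.inr (Or.inr ⟨t, c, hc, hx₀c, ?_, hcP1, hcP2⟩)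
        induction e₀ using Sym2.ind with
        | _ v1 v2 =>
          rcases Sym2.mem_iff.mp hve₀ with rfl | rfl
          · exact c.fst_mem_support_of_mem_edges he₀c
          · exact c.snd_mem_support_of_mem_edges he₀c
  · -- hecyc
    intro e he
    by_cases heP : e ∈ P.2
    · rcases hG.hecyc e heP with h | ⟨t, c, hc, h1, h2, h3, h4⟩
      · exact Or.inl h
      · exact Or.inr ⟨t, c, hc, h1, h2, fun u hu => hsub1 (h3 u hu),
          fun e' he' => hsub2 (h4 e' he')⟩
    · rcases he with he | ⟨a, ha, b, hb, p, hp, hlen, hout, he⟩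
      · exact absurd he heP
      · obtain ⟨t, c, hc, hx₀c, hec, hcP1, hcP2⟩ := hkey ha hb p hp hlen hout e he heP
        exact Or.inr ⟨t, c, hc, hx₀c, hec, hcP1, hcP2⟩

lemma aux_good_base (x₀ : V) : AuxGood G x₀ (wzpzBase G x₀) := by
  constructor
  · exact Or.inl rfl
  · exact fun a h => Or.inr h
  · exact fun a h => ⟨a, h, rfl⟩
  · rintro e ⟨a, h, rfl⟩
    exact ⟨x₀, a, rfl, h, Or.inl rfl, Or.inr h⟩
  · intro v hv
    rcases hv with hv | hv
    · have hvx : v = x₀ := hv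
      refine ⟨(Walk.nil : G.Walk x₀ x₀).copy rfl hvx.symm, ?_, by simp⟩
      intro u hu
      have : u = x₀ := by simpa using hu
      exact Or.inl this
    · refine ⟨Walk.cons (show G.Adj x₀ v from hv) Walk.nil, ?_, ?_⟩
      · intro u hu
        rcases (by simpa using hu : u = x₀ ∨ u = v) with rfl | rfl
        · exact Or.inl rfl
        · exact Or.inr hv
      · intro e he
        have : e = s(x₀, v) := by simpa using he
        exact this ▸ ⟨v, hv, rfl⟩
  · intro v hv
    rcases hv with hv | hv
    · exact Or.inl hv
    · exact Or.inr (Or.inl hv)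
  · rintro e ⟨a, h, rfl⟩
    exact Or.inl ⟨a, h, rfl⟩

lemma aux_good_wzpz [Fintype V] (x₀ : V) (k : ℕ) : AuxGood G x₀ (wzpz G x₀ k) := by
  classical
  induction k with
  | zero => exact aux_good_base x₀
  | succ k ih =>
    show AuxGood G x₀ (wSat G (k+1) (wzpz G x₀ k))
    rw [wSat]
    generalize Fintype.card V * Fintype.card V + Fintype.card V + 1 = m
    induction m with
    | zero => exact ih
    | succ m ihm =>
      rw [Function.iterate_succ_apply']
      exact aux_good_wAdd ihm (k+1)

lemma aux_wAdd_zero (P : Set V × Set (Sym2 V)) : wAdd G 0 P = P := by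
  have h1 : ∀ {a b : V} (p : G.Walk a b), p.length ≤ 0 → p.support = [a] ∧ p.edges = [] := by
    intro a b p hp
    cases p with
    | nil => simp
    | cons h q => simp at hp
  refine Prod.ext ?_ ?_
  · refine Set.union_eq_self_of_subset_right ?_
    rintro v ⟨a, ha, b, hb, p, hp, hlen, hout, hv⟩
    rw [(h1 p hlen).1] at hv
    have : v = a := by simpa using hv
    exact this ▸ ha.1
  · refine Set.union_eq_self_of_subset_right ?_
    rintro e ⟨a, ha, b, hb, p, hp, hlen, hout, he⟩
    rw [(h1 p hlen).2] at he
    simp at he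

/-- after saturation, one more step does nothing -/
lemma aux_sat_fix [Fintype V] (s : ℕ) (P : Set V × Set (Sym2 V)) :
    wAdd G s (wSat G s P) = wSat G s P := by
  classical
  set f := wAdd G s with hf
  set N := Fintype.card V * Fintype.card V + Fintype.card V with hN
  set μ : Set V × Set (Sym2 V) → ℕ := fun Q => Q.1.ncard + Q.2.ncard with hμ
  have hstep : ∀ Q, f Q ≠ Q → μ Q < μ (f Q) := by
    intro Q hQ
    have hs1 : Q.1 ⊆ (f Q).1 := Set.subset_union_left
    have hs2 : Q.2 ⊆ (f Q).2 := Set.subset_union_left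
    have hne : (f Q).1 ≠ Q.1 ∨ (f Q).2 ≠ Q.2 := by
      by_contra hc
      push_neg at hc
      exact hQ (Prod.ext hc.1 hc.2)
    have hm1 : Q.1.ncard ≤ (f Q).1.ncard := Set.ncard_le_ncard hs1 (Set.toFinite _)
    have hm2 : Q.2.ncard ≤ (f Q).2.ncard := Set.ncard_le_ncard hs2 (Set.toFinite _)
    rcases hne with hne | hne
    · have : Q.1.ncard < (f Q).1.ncard :=
        Set.ncard_lt_ncard (hs1.ssubset_of_ne (Ne.symm hne)) (Set.toFinite _)
      simp only [hμ]
      omega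
    · have : Q.2.ncard < (f Q).2.ncard :=
        Set.ncard_lt_ncard (hs2.ssubset_of_ne (Ne.symm hne)) (Set.toFinite _)
      simp only [hμ]
      omega
  have hbound : ∀ Q : Set V × Set (Sym2 V), μ Q ≤ N := by
    intro Q
    have h1 : Q.1.ncard ≤ Fintype.card V := by
      have := Set.ncard_le_ncard (Set.subset_univ Q.1) (Set.toFinite _)
      rwa [Set.ncard_univ, Nat.card_eq_fintype_card] at this
    have h2 : Q.2.ncard ≤ Fintype.card V * Fintype.card V := by
      have := Set.ncard_le_ncard (Set.subset_univ Q.2) (Set.toFinite _)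
      rw [Set.ncard_univ, Nat.card_eq_fintype_card] at this
      refine this.trans ?_
      rw [Sym2.card]
      set n := Fintype.card V
      rw [Nat.choose_two_right]
      simp only [Nat.add_sub_cancel]
      rcases Nat.eq_zero_or_pos n with hn | hn
      · simp [hn]
      · calc (n + 1) * n / 2 ≤ 2 * n * n / 2 := by
              apply Nat.div_le_div_right
              exact Nat.mul_le_mul_right n (by omega)
          _ = n * n := by
              rw [Nat.mul_assoc, Nat.mul_div_cancel_left _ (by norm_num : 0 < 2)]
    simp only [hμ]
    omega
  have hkey : ∃ k ≤ N, f^[k + 1] P = f^[k] P := by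
    by_contra hc
    push_neg at hc
    have hmono : ∀ k, k ≤ N + 1 → k ≤ μ (f^[k] P) := by
      intro k
      induction k with
      | zero => omega
      | succ k ihk =>
        intro hk
        have h1 := ihk (by omega)
        have h2 : f (f^[k] P) ≠ f^[k] P := by
          intro h
          exact hc k (by omega) (by rw [Function.iterate_succ_apply']; exact h)
        have h3 := hstep _ h2
        rw [show f (f^[k] P) = f^[k + 1] P from (Function.iterate_succ_apply' f k P).symm]
          at h3
        omega
    have := hmono (N + 1) le_rfl
    have := hbound (f^[N + 1] P)
    omega
  obtain ⟨k, hk, hfix⟩ := hkey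
  have hstat : ∀ j, f^[k + j] P = f^[k] P := by
    intro j
    induction j with
    | zero => rfl
    | succ j ihj =>
      have : k + (j + 1) = (k + j) + 1 := by omega
      rw [this, Function.iterate_succ_apply', ihj,
        show f (f^[k] P) = f^[k + 1] P from (Function.iterate_succ_apply' f k P).symm, hfix]
  have h1 : wSat G s P = f^[k] P := by
    have : N + 1 = k + (N + 1 - k) := by omega
    rw [wSat, ← hf, ← hN, this, hstat]
  rw [h1, show f (f^[k] P) = f^[k + 1] P from (Function.iterate_succ_apply' f k P).symm]
  exact hfix

lemma aux_wzpz_sat [Fintype V] (x₀ : V) (k : ℕ) :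
    wAdd G k (wzpz G x₀ k) = wzpz G x₀ k := by
  cases k with
  | zero => exact aux_wAdd_zero _
  | succ k => exact aux_sat_fix (k + 1) (wzpz G x₀ k)

/-- Part 1: no outside path connects two boundary vertices of the saturated neighborhood -/
lemma aux_part1 [DecidableEq V] {x₀ : V} {ℓ₀ : ℕ} {P : Set V × Set (Sym2 V)}
    (hG : AuxGood G x₀ P) (hsat : wAdd G (ℓ₀ - 1) P = P) (hb : cyclesBounded G ℓ₀) :
    ∀ y ∈ wBdry G P, ∀ z ∈ wBdry G P,
      ¬ ∃ p : G.Walk y z, p.IsPath ∧ 0 < p.length ∧ ∀ e ∈ p.edges, e ∉ P.2 := by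
  classical
  suffices H : ∀ n : ℕ, ∀ y, y ∈ wBdry G P → ∀ z, z ∈ wBdry G P →
      ∀ p : G.Walk y z, p.length = n → p.IsPath → 0 < p.length →
      (∀ e ∈ p.edges, e ∉ P.2) → False by
    rintro y hy z hz ⟨p, hp, hpos, hout⟩
    exact H p.length y hy z hz p rfl hp hpos hout
  intro n
  induction n using Nat.strong_induction_on with
  | _ n ih =>
    intro y hy z hz p hlen hp hpos hout
    have hyz : y ≠ z := by
      rintro rfl
      rw [Walk.isPath_iff_eq_nil] at hp
      subst hp
      simp at hpos
    have hpnil : ¬ p.Nil := by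
      rw [Walk.nil_iff_length_eq]
      omega
    by_cases hmid : ∃ v ∈ p.support, v ≠ y ∧ v ≠ z ∧ v ∈ P.1
    · -- split at an interior inside vertex, which is a boundary vertex
      obtain ⟨v, hv, hvy, hvz, hvP⟩ := hmid
      obtain ⟨e', he', hve'⟩ := aux_vertEdge p hpnil v hv
      have hvB : v ∈ wBdry G P :=
        aux_bdry_of_edge hG hvP (p.edges_subset_edgeSet he') (hout e' he') hve'
      set p₁ := p.takeUntil v hv with hp₁
      have hp₁path : p₁.IsPath := hp.takeUntil hv
      have hp₁pos : 0 < p₁.length := by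
        rcases Nat.eq_zero_or_pos p₁.length with h | h
        · exact absurd (Walk.eq_of_length_eq_zero h) (Ne.symm hvy)
        · exact h
      have hp₁lt : p₁.length < n := by
        have hspec := congrArg Walk.length (p.take_spec hv)
        rw [Walk.length_append, ← hp₁] at hspec
        have hp₂pos : 0 < (p.dropUntil v hv).length := by
          rcases Nat.eq_zero_or_pos (p.dropUntil v hv).length with h | h
          · exact absurd (Walk.eq_of_length_eq_zero h) hvz
          · exact h
        omega
      exact ih p₁.length hp₁lt y hy v hvB p₁ rfl hp₁path hp₁pos
        (fun e he => hout e (p.edges_takeUntil_subset hv he))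
    · -- p is internally outside : close it up into a cycle
      push_neg at hmid
      obtain ⟨w1, hw11, hw12⟩ := hG.hwalk y hy.1
      obtain ⟨w2, hw21, hw22⟩ := hG.hwalk z hz.1
      set r := (w2.reverse.append w1).bypass with hr
      have hrpath : r.IsPath := Walk.bypass_isPath _
      have hrsup : ∀ u ∈ r.support, u ∈ P.1 := by
        intro u hu
        have := Walk.support_bypass_subset _ hu
        rw [Walk.mem_support_append_iff] at this
        rcases this with h | h
        · rw [Walk.support_reverse, List.mem_reverse] at h
          exact hw21 u h
        · exact hw11 u h
      have hredg : ∀ e ∈ r.edges, e ∈ P.2 := by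
        intro e he
        have := Walk.edges_bypass_subset _ he
        rw [Walk.edges_append] at this
        rcases List.mem_append.mp this with h | h
        · rw [Walk.edges_reverse, List.mem_reverse] at h
          exact hw22 e h
        · exact hw12 e h
      have hrpos : 0 < r.length := by
        rcases Nat.eq_zero_or_pos r.length with h | h
        · exact absurd (Walk.eq_of_length_eq_zero h) (Ne.symm hyz)
        · exact h
      set C := p.append r with hC
      have hCcyc : C.IsCycle := by
        rw [Walk.isCycle_def]
        refine ⟨⟨?_⟩, ?_, ?_⟩
        · rw [hC, Walk.edges_append, List.nodup_append']
          exact ⟨hp.isTrail.edges_nodup, hrpath.isTrail.edges_nodup,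
            fun e hep her => hout e hep (hredg e her)⟩
        · intro h
          have := congrArg Walk.length h
          rw [hC, Walk.length_append] at this
          simp only [Walk.length_nil] at this
          omega
        · rw [hC, Walk.tail_support_append, List.nodup_append']
          refine ⟨hp.support_nodup.tail, hrpath.support_nodup.tail, ?_⟩
          intro v hvp hvr
          have hvps : v ∈ p.support := List.mem_of_mem_tail hvp
          have hvy : v ≠ y := fun h => aux_start_not_mem_tail p hp (h ▸ hvp)
          by_cases hvz : v = z
          · exact aux_start_not_mem_tail r hrpath (hvz ▸ hvr)
          · exact hmid v hvps hvy hvz (hrsup v (List.mem_of_mem_tail hvr))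
      have hClen := hb y C hCcyc
      have hC3 := hCcyc.three_le_length
      rw [hC, Walk.length_append] at hClen hC3
      -- p would have been absorbed by saturation
      have hplen : p.length ≤ ℓ₀ - 1 := by omega
      obtain ⟨e₀, he₀⟩ : ∃ e, e ∈ p.edges := by
        cases p with
        | nil => simp at hpos
        | cons h q => exact ⟨_, by rw [Walk.edges_cons]; exact List.mem_cons_self⟩
      have : e₀ ∈ (wAdd G (ℓ₀ - 1) P).2 :=
        Or.inr ⟨y, hy, z, hz, p, hp, hplen, hout, he₀⟩
      rw [hsat] at this
      exact hout e₀ he₀ this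

/-- with no outside connecting paths, any path between inside vertices stays inside -/
lemma aux_inside_path [DecidableEq V] {x₀ : V} {P : Set V × Set (Sym2 V)}
    (hG : AuxGood G x₀ P)
    (hpart1 : ∀ y ∈ wBdry G P, ∀ z ∈ wBdry G P,
      ¬ ∃ p : G.Walk y z, p.IsPath ∧ 0 < p.length ∧ ∀ e ∈ p.edges, e ∉ P.2)
    {a b : V} (ha : a ∈ P.1) (hb : b ∈ P.1) (q : G.Walk a b) (hq : q.IsPath) :
    (∀ e ∈ q.edges, e ∈ P.2) ∧ (∀ v ∈ q.support, v ∈ P.1) := by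
  have hedges : ∀ e ∈ q.edges, e ∈ P.2 := by
    intro e he
    by_contra heP
    obtain ⟨u', w', q', h1, h2, h3, h4, h5, h6, h7, h8, h9⟩ :=
      aux_seg hG q.length q le_rfl hq ha hb e he heP
    have hq'nil : ¬ q'.Nil := by
      intro hnil
      rw [Walk.nil_iff_length_eq] at hnil
      exact h1 (Walk.eq_of_length_eq_zero hnil)
    obtain ⟨e₁, he₁, hue₁⟩ := aux_vertEdge q' hq'nil u' q'.start_mem_support
    obtain ⟨e₂, he₂, hwe₂⟩ := aux_vertEdge q' hq'nil w' q'.end_mem_support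
    have hu'B : u' ∈ wBdry G P :=
      aux_bdry_of_edge hG h2 (q'.edges_subset_edgeSet he₁) (h6 e₁ he₁) hue₁
    have hw'B : w' ∈ wBdry G P :=
      aux_bdry_of_edge hG h3 (q'.edges_subset_edgeSet he₂) (h6 e₂ he₂) hwe₂
    refine hpart1 u' hu'B w' hw'B ⟨q', h4, ?_, h6⟩
    rcases Nat.eq_zero_or_pos q'.length with h | h
    · exact absurd (Walk.eq_of_length_eq_zero h) h1
    · exact h
  refine ⟨hedges, ?_⟩
  intro v hv
  by_cases hnil : q.Nil
  · cases q with
    | nil =>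
      have : v = a := by simpa using hv
      exact this ▸ ha
    | cons h q' => simp at hnil
  · obtain ⟨e, he, hve⟩ := aux_vertEdge q hnil v hv
    exact hG.vert_of_edge (hedges e he) hve

/-- every inside cycle through `x₀` is contained in the KCN neighborhood -/
lemma aux_cycle_to_kcn [DecidableEq V] {x₀ : V} {ℓ₀ : ℕ} (hb : cyclesBounded G ℓ₀)
    {t : V} (c : G.Walk t t) (hc : c.IsCycle) (hx₀ : x₀ ∈ c.support) :
    (∀ v ∈ c.support, v ∈ kcnVerts G ℓ₀ x₀) ∧ (∀ e ∈ c.edges, e ∈ kcnEdges G ℓ₀ x₀) := by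
  have hnil : ¬ c.Nil := hc.isCircuit.not_nil
  set c' := c.rotate _ hx₀ with hc'
  have hc'cyc : c'.IsCycle := hc.rotate hx₀
  have hmems : ∀ v, v ∈ c'.support ↔ v ∈ c.support :=
    fun v => aux_rotate_mem_support c hnil hx₀ v
  have hmeme : ∀ e, e ∈ c'.edges ↔ e ∈ c.edges :=
    fun e => aux_rotate_mem_edges c hx₀ e
  have hc'nil : ¬ c'.Nil := hc'cyc.isCircuit.not_nil
  obtain ⟨a, hadj, q, hq⟩ := Walk.not_nil_iff.mp hc'nil
  -- decompose q from the other end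
  have hqnil : ¬ q.Nil := by
    intro h
    rw [Walk.nil_iff_length_eq] at h
    exact G.ne_of_adj hadj (Walk.eq_of_length_eq_zero h).symm
  have hqrnil : ¬ q.reverse.Nil := by
    rwa [Walk.nil_iff_length_eq, Walk.length_reverse, ← Walk.nil_iff_length_eq]
  obtain ⟨bb, hadj2, r₂, hqr⟩ := Walk.not_nil_iff.mp hqrnil
  set r := r₂.reverse with hrdef
  have hqeq : q = r.append (Walk.cons hadj2.symm Walk.nil) := by
    have := congrArg Walk.reverse hqr
    rw [Walk.reverse_reverse] at this
    rw [this, Walk.reverse_cons, hrdef]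
  -- structure of support and edges
  have hqsup : q.support = r.support ++ [x₀] := by
    rw [hqeq, Walk.support_append]
    simp
  have hqedg : q.edges = r.edges ++ [s(bb, x₀)] := by
    rw [hqeq, Walk.edges_append]
    simp
  have hqpath : q.IsPath := by
    rw [Walk.isPath_def]
    have := hc'cyc.2
    rw [hq] at this
    simpa using this
  have hrpath : r.IsPath := by
    have := hqpath
    rw [hqeq] at this
    exact this.of_append_left
  have hx₀r : x₀ ∉ r.support := by
    have := hqpath.support_nodup
    rw [hqsup, List.nodup_append'] at this
    exact fun h => this.2.2 h (List.mem_singleton_self _)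
  have hane : a ≠ bb := by
    intro h
    subst h
    have : r = Walk.nil := by
      rw [Walk.isPath_iff_eq_nil] at hrpath
      exact hrpath
    have hlen := hc'cyc.three_le_length
    rw [hq, hqeq, this] at hlen
    simp at hlen
  have hlenr : r.length ≤ ℓ₀ - 2 := by
    have hlc := hb x₀ c' hc'cyc
    have h3 := hc'cyc.three_le_length
    have : c'.length = r.length + 2 := by
      rw [hq, hqeq]
      simp [Walk.length_append]
    omega
  have hvert : ∀ v ∈ c'.support, v ∈ kcnVerts G ℓ₀ x₀ := by
    intro v hv
    rw [hq] at hv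
    rcases List.mem_cons.mp (by simpa using hv) with rfl | hv
    · exact Or.inl (Or.inl rfl)
    · rw [hqsup] at hv
      rcases List.mem_append.mp hv with hv | hv
      · exact Or.inr ⟨a, bb, hadj, hadj2, hane, r, hrpath, hlenr, hv⟩
      · rw [List.mem_singleton] at hv
        exact Or.inl (Or.inl hv)
  have hedge : ∀ e ∈ c'.edges, e ∈ kcnEdges G ℓ₀ x₀ := by
    intro e he
    rw [hq] at he
    rcases List.mem_cons.mp (by simpa using he) with rfl | he
    · exact Or.inl ⟨a, hadj, rfl⟩
    · rw [hqedg] at he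
      rcases List.mem_append.mp he with he | he
      · exact Or.inr ⟨a, bb, hadj, hadj2, hane, r, hrpath, hlenr, he⟩
      · rw [List.mem_singleton] at he
        exact Or.inl ⟨bb, hadj2, he.trans (Sym2.eq_swap)⟩
  exact ⟨fun v hv => hvert v ((hmems v).mpr hv), fun e he => hedge e ((hmeme e).mpr he)⟩

/-- If every cycle of the finite connected graph `G` has length at most `ℓ₀`, then the
boundary of the WZPZ `(ℓ₀−1)`-neighborhood of any vertex `x₀` admits no connecting
outside path: for boundary vertices `y`, `z` there is no nontrivial path from `y` to `z`
all of whose edges lie outside the neighborhood. Moreover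
`N^K_{ℓ₀}(x₀) = N^W_{ℓ₀−1}(x₀)`. -/
theorem stmt_10 {V : Type} [Fintype V] (G : SimpleGraph V) (hconn : G.Connected)
    (ℓ₀ : ℕ) (hcyc : cyclesBounded G ℓ₀) (x₀ : V) :
    (∀ y ∈ wBdry G (wzpz G x₀ (ℓ₀ - 1)), ∀ z ∈ wBdry G (wzpz G x₀ (ℓ₀ - 1)),
        ¬ ∃ p : G.Walk y z, p.IsPath ∧ 0 < p.length ∧
            ∀ e ∈ p.edges, e ∉ (wzpz G x₀ (ℓ₀ - 1)).2) ∧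
      kcnVerts G ℓ₀ x₀ = (wzpz G x₀ (ℓ₀ - 1)).1 ∧
      kcnEdges G ℓ₀ x₀ = (wzpz G x₀ (ℓ₀ - 1)).2 := by
  classical
  have hG : AuxGood G x₀ (wzpz G x₀ (ℓ₀ - 1)) := aux_good_wzpz x₀ (ℓ₀ - 1)
  have hsat : wAdd G (ℓ₀ - 1) (wzpz G x₀ (ℓ₀ - 1)) = wzpz G x₀ (ℓ₀ - 1) :=
    aux_wzpz_sat x₀ (ℓ₀ - 1)
  have hpart1 := aux_part1 hG hsat hcyc
  refine ⟨hpart1, ?_, ?_⟩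
  · apply Set.Subset.antisymm
    · intro v hv
      rcases hv with (hv | hv) | ⟨a, b, hadja, hadjb, hab, q, hqpath, hlen, hv⟩
      · exact (show v = x₀ from hv) ▸ hG.hx
      · exact hG.hnbr v hv
      · exact (aux_inside_path hG hpart1 (hG.hnbr a hadja) (hG.hnbr b hadjb)
          q hqpath).2 v hv
    · intro v hv
      rcases hG.hcyc v hv with rfl | h | ⟨t, c, hc, h1, h2, h3, h4⟩
      · exact Or.inl (Or.inl rfl)
      · exact Or.inl (Or.inr h)
      · exact (aux_cycle_to_kcn hcyc c hc h1).1 v h2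
  · apply Set.Subset.antisymm
    · intro e he
      rcases he with ⟨a, hadj, rfl⟩ | ⟨a, b, hadja, hadjb, hab, q, hqpath, hlen, he⟩
      · exact hG.hinc a hadj
      · exact (aux_inside_path hG hpart1 (hG.hnbr a hadja) (hG.hnbr b hadjb)
          q hqpath).1 e he
    · intro e he
      rcases hG.hecyc e he with ⟨a, h, rfl⟩ | ⟨t, c, hc, h1, h2, h3, h4⟩
      · exact Or.inl ⟨a, h, rfl⟩
      · exact (aux_cycle_to_kcn hcyc c hc h1).2 e h2
end

section
/- There exists a finite graph G and a vertex x₀ such that the WZPZ-neighborhood relation is not symmetric: there exist vertices i, j with j ∈ N^W_{ℓ₀}(i) but i ∉ N^W_{ℓ₀}(j). Concretely, in the 10-vertex graph of the paper with ℓ₀ = 5, the central bottom vertex i has N^W_5(i) equal to the whole graph (so j ∈ N^W_5(i)), while N^W_5(j) for the central top vertex j contains only j, its nearest neighbors, and the connecting edges. -/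
def edges13 : List (Fin 13 × Fin 13) :=
  [(0,1),(1,2),(2,3),(3,4),(4,5),(5,6),(6,0),(0,12),(3,7),(7,8),(8,9),(9,4),(8,10),(10,11),(11,12)]

def G13 : SimpleGraph (Fin 13) where
  Adj x y := (x,y) ∈ edges13 ∨ (y,x) ∈ edges13
  symm := ⟨by intro x y h; tauto⟩
  loopless := ⟨by intro x h; revert x; decide⟩

instance : DecidableRel G13.Adj := fun x y =>
  inferInstanceAs (Decidable ((x,y) ∈ edges13 ∨ (y,x) ∈ edges13))

def fj : Fin 13 → ℤ := fun x => [6,5,4,3,3,4,5,2,1,2,0,7,7].getD x.val 0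
def fv : Fin 13 → ℤ := fun x => [7,7,6,5,5,6,7,4,3,4,2,1,0].getD x.val 0
def g1 : Fin 13 → ℤ := fun x => [5,0,1,2,3,4,5,3,4,4,5,6,7].getD x.val 0
def g6 : Fin 13 → ℤ := fun x => [5,5,4,3,2,1,0,4,4,3,5,6,7].getD x.val 0

example : ∀ x y : Fin 13, G13.Adj x y → ¬(x = 11 ∨ y = 11) → |fj x - fj y| ≤ 1 := by decide
example : ∀ x y : Fin 13, G13.Adj x y → ¬(x = 0 ∨ y = 0) → |fv x - fv y| ≤ 1 := by decide
example : ∀ x y : Fin 13, G13.Adj x y → ¬(x = 0 ∨ y = 0) → |g1 x - g1 y| ≤ 1 := by decide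
example : ∀ x y : Fin 13, G13.Adj x y → ¬(x = 0 ∨ y = 0) → |g6 x - g6 y| ≤ 1 := by decide
example : ∀ v : Fin 13, |g1 v - g1 1| + |g6 6 - g6 v| ≤ 5 → (v = 1 ∨ v = 2 ∨ v = 3 ∨ v = 4 ∨ v = 5 ∨ v = 6) := by decide
example : ∀ v : Fin 13, |g6 v - g6 6| + |g1 1 - g1 v| ≤ 5 → (v = 1 ∨ v = 2 ∨ v = 3 ∨ v = 4 ∨ v = 5 ∨ v = 6) := by decide
example : ∀ x y : Fin 13, G13.Adj x y →
    (s(x,y) = s(0,1) ∨ s(x,y) = s(0,6) ∨ s(x,y) = s(0,12) ∨ s(x,y) = s(1,2) ∨ s(x,y) = s(2,3) ∨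
     s(x,y) = s(3,4) ∨ s(x,y) = s(4,5) ∨ s(x,y) = s(5,6) ∨ s(x,y) = s(3,7) ∨ s(x,y) = s(7,8) ∨
     s(x,y) = s(8,10) ∨ s(x,y) = s(10,11) ∨ s(x,y) = s(11,12) ∨ s(x,y) = s(4,9) ∨ s(x,y) = s(9,8)) := by decide

open SimpleGraph

lemma pot {V : Type} {G : SimpleGraph V} (f : V → ℤ) :
    ∀ {a b : V} (p : G.Walk a b),
      (∀ x y : V, s(x,y) ∈ p.edges → |f x - f y| ≤ 1) → |f b - f a| ≤ (p.length : ℤ)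
  | _, _, .nil, _ => by simp
  | a, b, .cons (v := c) h q, hf => by
      have h1 : |f c - f a| ≤ 1 := by
        rw [abs_sub_comm]; exact hf a c (by simp)
      have h2 := pot f q (fun x y hxy => by
        exact hf x y (by rw [Walk.edges_cons]; exact List.mem_cons_of_mem _ hxy))
      have h3 : |f b - f a| ≤ |f b - f c| + |f c - f a| := abs_sub_le _ _ _
      rw [Walk.length_cons]
      push_cast
      linarith

lemma potSplit {V : Type} [DecidableEq V] {G : SimpleGraph V} (f g : V → ℤ) {a b : V}
    (p : G.Walk a b) {w : V} (hw : w ∈ p.support)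
    (hf : ∀ x y : V, s(x,y) ∈ p.edges → |f x - f y| ≤ 1)
    (hg : ∀ x y : V, s(x,y) ∈ p.edges → |g x - g y| ≤ 1) :
    |f w - f a| + |g b - g w| ≤ (p.length : ℤ) := by
  have hs := p.take_spec hw
  have h1 := pot f (p.takeUntil w hw) (fun x y hxy => hf x y (p.edges_takeUntil_subset hw hxy))
  have h2 := pot g (p.dropUntil w hw) (fun x y hxy => hg x y (p.edges_dropUntil_subset hw hxy))
  have hl : (p.takeUntil w hw).length + (p.dropUntil w hw).length = p.length := by
    rw [← SimpleGraph.Walk.length_append, hs]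
  rw [← hl]
  push_cast
  linarith


lemma bdry_top {V : Type} (G : SimpleGraph V) : wBdry G (Set.univ, G.edgeSet) = ∅ := by
  ext v
  simp [wBdry, SimpleGraph.mem_edgeSet]

lemma wAdd_top {V : Type} (G : SimpleGraph V) (s : ℕ) :
    wAdd G s (Set.univ, G.edgeSet) = (Set.univ, G.edgeSet) := by
  unfold wAdd
  rw [bdry_top]
  refine Prod.ext ?_ ?_ <;> ext x <;> simp

lemma bdry_base {V : Type} (G : SimpleGraph V) (x₀ : V) :
    wBdry G (wzpzBase G x₀) ⊆ G.neighborSet x₀ := by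
  rintro v ⟨hv1, w, hw, hn⟩
  rcases hv1 with h | h
  · rw [Set.mem_singleton_iff] at h
    subst h
    exact absurd ⟨w, hw, rfl⟩ hn
  · exact h

lemma not_in_base2 {V : Type} (G : SimpleGraph V) {x₀ x y : V} (hx : x ≠ x₀) (hy : y ≠ x₀) :
    s(x,y) ∉ (wzpzBase G x₀).2 := by
  rintro ⟨a, -, heq⟩
  rw [Sym2.eq_iff] at heq
  rcases heq with ⟨h, -⟩ | ⟨-, h⟩
  · exact hx h
  · exact hy h

/-- freshness w.r.t. a base turns the decide-Lipschitz fact into Lipschitz along the path -/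
lemma lip_of_fresh {x₀ : Fin 13} (f : Fin 13 → ℤ)
    (hD : ∀ x y : Fin 13, G13.Adj x y → ¬(x = x₀ ∨ y = x₀) → |f x - f y| ≤ 1)
    {a b : Fin 13} (p : G13.Walk a b) (hfr : ∀ e ∈ p.edges, e ∉ (wzpzBase G13 x₀).2) :
    ∀ x y : Fin 13, s(x,y) ∈ p.edges → |f x - f y| ≤ 1 := by
  intro x y he
  have hadj : G13.Adj x y := (SimpleGraph.mem_edgeSet G13).mp (p.edges_subset_edgeSet he)
  by_cases h0 : x = x₀ ∨ y = x₀
  · exfalso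
    rcases h0 with rfl | rfl
    · exact hfr _ he ⟨y, hadj, rfl⟩
    · exact hfr _ he ⟨x, hadj.symm, Sym2.eq_swap⟩
  · exact hD x y hadj h0

/- ---------------- j-side: the base at 11 is a fixed point ---------------- -/
lemma wAdd_Bj (s : ℕ) (hs : s ≤ 5) : wAdd G13 s (wzpzBase G13 11) = wzpzBase G13 11 := by
  set P := wzpzBase G13 11 with hP
  have hbd : ∀ a ∈ wBdry G13 P, a = 10 ∨ a = 12 := by
    intro a ha
    exact (by decide : ∀ a : Fin 13, G13.Adj 11 a → a = 10 ∨ a = 12) a (bdry_base G13 11 ha)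
  have key : ∀ (a b : Fin 13), a ∈ wBdry G13 P → b ∈ wBdry G13 P →
      ∀ (p : G13.Walk a b), p.IsPath → p.length ≤ s → (∀ e ∈ p.edges, e ∉ P.2) →
      (∀ v ∈ p.support, v ∈ P.1) ∧ (∀ e ∈ p.edges, e ∈ P.2) := by
    intro a b ha hb p hp hl hfr
    have hlip := lip_of_fresh fj
      (by decide : ∀ x y : Fin 13, G13.Adj x y → ¬(x = 11 ∨ y = 11) → |fj x - fj y| ≤ 1) p hfr
    have habs : |fj b - fj a| ≤ (p.length : ℤ) := pot fj p hlip
    have hlen5 : (p.length : ℤ) ≤ 5 := by exact_mod_cast le_trans hl hs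
    rcases hbd a ha with rfl | rfl <;> rcases hbd b hb with rfl | rfl
    · -- 10 10 : nil
      rw [(SimpleGraph.Walk.isPath_iff_eq_nil).mp hp]
      constructor
      · intro v hv
        simp only [SimpleGraph.Walk.support_nil, List.mem_singleton] at hv
        subst hv; exact ha.1
      · intro e he; simp at he
    · exfalso
      have : |fj 12 - fj 10| = 7 := by decide
      omega
    · exfalso
      have : |fj 10 - fj 12| = 7 := by decide
      omega
    · rw [(SimpleGraph.Walk.isPath_iff_eq_nil).mp hp]
      constructor
      · intro v hv
        simp only [SimpleGraph.Walk.support_nil, List.mem_singleton] at hv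
        subst hv; exact ha.1
      · intro e he; simp at he
  refine Prod.ext ?_ ?_ <;> apply Set.Subset.antisymm
  · rintro v (hv | ⟨a, ha, b, hb, p, hp, hl, hfr, hv⟩)
    · exact hv
    · exact (key a b ha hb p hp hl hfr).1 v hv
  · exact Set.subset_union_left
  · rintro e (he | ⟨a, ha, b, hb, p, hp, hl, hfr, he⟩)
    · exact he
    · exact (key a b ha hb p hp hl hfr).2 e he
  · exact Set.subset_union_left

/- ---------------- i-side ---------------- -/
lemma hbd_i : ∀ a ∈ wBdry G13 (wzpzBase G13 0), a = 1 ∨ a = 6 ∨ a = 12 := by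
  intro a ha
  exact (by decide : ∀ a : Fin 13, G13.Adj 0 a → a = 1 ∨ a = 6 ∨ a = 12) a (bdry_base G13 0 ha)

lemma lip_fv {a b : Fin 13} (p : G13.Walk a b) (hfr : ∀ e ∈ p.edges, e ∉ (wzpzBase G13 0).2) :
    ∀ x y : Fin 13, s(x,y) ∈ p.edges → |fv x - fv y| ≤ 1 :=
  lip_of_fresh fv (by decide) p hfr

lemma lip_g1 {a b : Fin 13} (p : G13.Walk a b) (hfr : ∀ e ∈ p.edges, e ∉ (wzpzBase G13 0).2) :
    ∀ x y : Fin 13, s(x,y) ∈ p.edges → |g1 x - g1 y| ≤ 1 :=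
  lip_of_fresh g1 (by decide) p hfr

lemma lip_g6 {a b : Fin 13} (p : G13.Walk a b) (hfr : ∀ e ∈ p.edges, e ∉ (wzpzBase G13 0).2) :
    ∀ x y : Fin 13, s(x,y) ∈ p.edges → |g6 x - g6 y| ≤ 1 :=
  lip_of_fresh g6 (by decide) p hfr

lemma wAdd_Bi_small (s : ℕ) (hs : s ≤ 4) : wAdd G13 s (wzpzBase G13 0) = wzpzBase G13 0 := by
  set P := wzpzBase G13 0 with hP
  have key : ∀ (a b : Fin 13), a ∈ wBdry G13 P → b ∈ wBdry G13 P →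
      ∀ (p : G13.Walk a b), p.IsPath → p.length ≤ s → (∀ e ∈ p.edges, e ∉ P.2) →
      (∀ v ∈ p.support, v ∈ P.1) ∧ (∀ e ∈ p.edges, e ∈ P.2) := by
    intro a b ha hb p hp hl hfr
    have hlen : (p.length : ℤ) ≤ 4 := by exact_mod_cast le_trans hl hs
    have hnil : ∀ (c : Fin 13) (q : G13.Walk c c), q.IsPath → c ∈ P.1 →
        (∀ v ∈ q.support, v ∈ P.1) ∧ (∀ e ∈ q.edges, e ∈ P.2) := by
      intro c q hq hc
      rw [(SimpleGraph.Walk.isPath_iff_eq_nil).mp hq]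
      refine ⟨?_, ?_⟩
      · intro v hv
        simp only [SimpleGraph.Walk.support_nil, List.mem_singleton] at hv
        subst hv; exact hc
      · intro e he; simp at he
    have hfv := pot fv p (lip_fv p hfr)
    have hg1 := pot g1 p (lip_g1 p hfr)
    rcases hbd_i a ha with rfl | rfl | rfl <;> rcases hbd_i b hb with rfl | rfl | rfl
    · exact hnil _ p hp ha.1
    · exfalso; have : |g1 6 - g1 1| = 5 := by decide
      omega
    · exfalso; have : |fv 12 - fv 1| = 7 := by decide
      omega
    · exfalso; have : |g1 1 - g1 6| = 5 := by decide
      omega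
    · exact hnil _ p hp ha.1
    · exfalso; have : |fv 12 - fv 6| = 7 := by decide
      omega
    · exfalso; have : |fv 1 - fv 12| = 7 := by decide
      omega
    · exfalso; have : |fv 6 - fv 12| = 7 := by decide
      omega
    · exact hnil _ p hp ha.1
  refine Prod.ext ?_ ?_ <;> apply Set.Subset.antisymm
  · rintro v (hv | ⟨a, ha, b, hb, p, hp, hl, hfr, hv⟩)
    · exact hv
    · exact (key a b ha hb p hp hl hfr).1 v hv
  · exact Set.subset_union_left
  · rintro e (he | ⟨a, ha, b, hb, p, hp, hl, hfr, he⟩)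
    · exact he
    · exact (key a b ha hb p hp hl hfr).2 e he
  · exact Set.subset_union_left

def B1 : Set (Fin 13) × Set (Sym2 (Fin 13)) :=
  ((wzpzBase G13 0).1 ∪ {2,3,4,5},
   (wzpzBase G13 0).2 ∪ {s(1,2),s(2,3),s(3,4),s(4,5),s(5,6)})

def p156 : G13.Walk 1 6 :=
  .cons (v := 2) (by decide) (.cons (v := 3) (by decide) (.cons (v := 4) (by decide)
    (.cons (v := 5) (by decide) (.cons (v := 6) (by decide) .nil))))

lemma p156_edges : p156.edges = [s(1,2),s(2,3),s(3,4),s(4,5),s(5,6)] := by decide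

lemma p156_fresh : ∀ e ∈ p156.edges, e ∉ (wzpzBase G13 0).2 := by
  intro e he
  rw [p156_edges] at he
  simp only [List.mem_cons, List.mem_singleton, List.not_mem_nil, or_false] at he
  rcases he with rfl | rfl | rfl | rfl | rfl <;>
    exact not_in_base2 G13 (by decide) (by decide)

lemma bdry1 : (1 : Fin 13) ∈ wBdry G13 (wzpzBase G13 0) :=
  ⟨Or.inr (by decide : G13.Adj 0 1), 2, by decide, not_in_base2 G13 (by decide) (by decide)⟩

lemma bdry6 : (6 : Fin 13) ∈ wBdry G13 (wzpzBase G13 0) :=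
  ⟨Or.inr (by decide : G13.Adj 0 6), 5, by decide, not_in_base2 G13 (by decide) (by decide)⟩

lemma mem_B1_of_six : ∀ v : Fin 13, (v = 1 ∨ v = 2 ∨ v = 3 ∨ v = 4 ∨ v = 5 ∨ v = 6) → v ∈ B1.1 := by
  intro v hv
  rcases hv with rfl | rfl | rfl | rfl | rfl | rfl
  · exact Or.inl (Or.inr (by decide : G13.Adj 0 1))
  · exact Or.inr (by simp)
  · exact Or.inr (by simp)
  · exact Or.inr (by simp)
  · exact Or.inr (by simp)
  · exact Or.inl (Or.inr (by decide : G13.Adj 0 6))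

lemma step1 : wAdd G13 5 (wzpzBase G13 0) = B1 := by
  set P := wzpzBase G13 0 with hP
  -- the support of any admissible nontrivial path is inside {1,...,6}
  have keysup : ∀ (a b : Fin 13), a ∈ wBdry G13 P → b ∈ wBdry G13 P →
      ∀ (p : G13.Walk a b), p.IsPath → p.length ≤ 5 → (∀ e ∈ p.edges, e ∉ P.2) →
      (∀ v ∈ p.support, v ∈ B1.1) ∧ (∀ e ∈ p.edges, e ∈ B1.2) := by
    intro a b ha hb p hp hl hfr
    have hlen : (p.length : ℤ) ≤ 5 := by exact_mod_cast hl
    have hfv := pot fv p (lip_fv p hfr)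
    have hnil : ∀ (c : Fin 13) (q : G13.Walk c c), q.IsPath → c ∈ P.1 →
        (∀ v ∈ q.support, v ∈ B1.1) ∧ (∀ e ∈ q.edges, e ∈ B1.2) := by
      intro c q hq hc
      rw [(SimpleGraph.Walk.isPath_iff_eq_nil).mp hq]
      refine ⟨?_, ?_⟩
      · intro v hv
        simp only [SimpleGraph.Walk.support_nil, List.mem_singleton] at hv
        subst hv; exact Or.inl hc
      · intro e he; simp at he
    have main16 : ∀ (p' : G13.Walk 1 6), p'.length ≤ 5 → (∀ e ∈ p'.edges, e ∉ P.2) →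
        (∀ v ∈ p'.support, v ∈ B1.1) ∧ (∀ e ∈ p'.edges, e ∈ B1.2) := by
      intro p' hl' hfr'
      have hlen' : (p'.length : ℤ) ≤ 5 := by exact_mod_cast hl'
      have hsup : ∀ v ∈ p'.support, (v = 1 ∨ v = 2 ∨ v = 3 ∨ v = 4 ∨ v = 5 ∨ v = 6) := by
        intro v hv
        have := potSplit g1 g6 p' hv (lip_g1 p' hfr') (lip_g6 p' hfr')
        refine (by decide : ∀ v : Fin 13,
          |g1 v - g1 1| + |g6 6 - g6 v| ≤ 5 → (v = 1 ∨ v = 2 ∨ v = 3 ∨ v = 4 ∨ v = 5 ∨ v = 6)) v ?_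
        omega
      refine ⟨fun v hv => mem_B1_of_six v (hsup v hv), ?_⟩
      intro e he
      induction e using Sym2.ind with
      | _ x y =>
        have hx := hsup x (p'.fst_mem_support_of_mem_edges he)
        have hy := hsup y (p'.snd_mem_support_of_mem_edges he)
        have hadj : G13.Adj x y := (SimpleGraph.mem_edgeSet G13).mp (p'.edges_subset_edgeSet he)
        have := (by decide : ∀ x y : Fin 13, G13.Adj x y →
          (x = 1 ∨ x = 2 ∨ x = 3 ∨ x = 4 ∨ x = 5 ∨ x = 6) →
          (y = 1 ∨ y = 2 ∨ y = 3 ∨ y = 4 ∨ y = 5 ∨ y = 6) →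
          (s(x,y) = s(1,2) ∨ s(x,y) = s(2,3) ∨ s(x,y) = s(3,4) ∨ s(x,y) = s(4,5) ∨ s(x,y) = s(5,6)))
          x y hadj hx hy
        rcases this with h | h | h | h | h <;> rw [h] <;> exact Or.inr (by simp)
    have main61 : ∀ (p' : G13.Walk 6 1), p'.length ≤ 5 → (∀ e ∈ p'.edges, e ∉ P.2) →
        (∀ v ∈ p'.support, v ∈ B1.1) ∧ (∀ e ∈ p'.edges, e ∈ B1.2) := by
      intro p' hl' hfr'
      have hlen' : (p'.length : ℤ) ≤ 5 := by exact_mod_cast hl'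
      have hsup : ∀ v ∈ p'.support, (v = 1 ∨ v = 2 ∨ v = 3 ∨ v = 4 ∨ v = 5 ∨ v = 6) := by
        intro v hv
        have := potSplit g6 g1 p' hv (lip_g6 p' hfr') (lip_g1 p' hfr')
        refine (by decide : ∀ v : Fin 13,
          |g6 v - g6 6| + |g1 1 - g1 v| ≤ 5 → (v = 1 ∨ v = 2 ∨ v = 3 ∨ v = 4 ∨ v = 5 ∨ v = 6)) v ?_
        omega
      refine ⟨fun v hv => mem_B1_of_six v (hsup v hv), ?_⟩
      intro e he
      induction e using Sym2.ind with
      | _ x y =>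
        have hx := hsup x (p'.fst_mem_support_of_mem_edges he)
        have hy := hsup y (p'.snd_mem_support_of_mem_edges he)
        have hadj : G13.Adj x y := (SimpleGraph.mem_edgeSet G13).mp (p'.edges_subset_edgeSet he)
        have := (by decide : ∀ x y : Fin 13, G13.Adj x y →
          (x = 1 ∨ x = 2 ∨ x = 3 ∨ x = 4 ∨ x = 5 ∨ x = 6) →
          (y = 1 ∨ y = 2 ∨ y = 3 ∨ y = 4 ∨ y = 5 ∨ y = 6) →
          (s(x,y) = s(1,2) ∨ s(x,y) = s(2,3) ∨ s(x,y) = s(3,4) ∨ s(x,y) = s(4,5) ∨ s(x,y) = s(5,6)))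
          x y hadj hx hy
        rcases this with h | h | h | h | h <;> rw [h] <;> exact Or.inr (by simp)
    rcases hbd_i a ha with rfl | rfl | rfl <;> rcases hbd_i b hb with rfl | rfl | rfl
    · exact hnil _ p hp ha.1
    · exact main16 p hl hfr
    · exfalso; have : |fv 12 - fv 1| = 7 := by decide
      omega
    · exact main61 p hl hfr
    · exact hnil _ p hp ha.1
    · exfalso; have : |fv 12 - fv 6| = 7 := by decide
      omega
    · exfalso; have : |fv 1 - fv 12| = 7 := by decide
      omega
    · exfalso; have : |fv 6 - fv 12| = 7 := by decide
      omega
    · exact hnil _ p hp ha.1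
  refine Prod.ext ?_ ?_ <;> apply Set.Subset.antisymm
  · rintro v (hv | ⟨a, ha, b, hb, p, hp, hl, hfr, hv⟩)
    · exact Or.inl hv
    · exact (keysup a b ha hb p hp hl hfr).1 v hv
  · rintro v (hv | hv)
    · exact Or.inl hv
    · refine Or.inr ⟨1, bdry1, 6, bdry6, p156, by rw [SimpleGraph.Walk.isPath_def]; decide,
        by decide, p156_fresh, ?_⟩
      simp only [Set.mem_insert_iff, Set.mem_singleton_iff] at hv
      rcases hv with rfl | rfl | rfl | rfl <;> decide
  · rintro e (he | ⟨a, ha, b, hb, p, hp, hl, hfr, he⟩)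
    · exact Or.inl he
    · exact (keysup a b ha hb p hp hl hfr).2 e he
  · rintro e (he | he)
    · exact Or.inl he
    · refine Or.inr ⟨1, bdry1, 6, bdry6, p156, by rw [SimpleGraph.Walk.isPath_def]; decide,
        by decide, p156_fresh, ?_⟩
      simp only [Set.mem_insert_iff, Set.mem_singleton_iff] at he
      rcases he with rfl | rfl | rfl | rfl | rfl <;> decide

lemma not_in_B12 {x y : Fin 13} (hx : x ≠ 0) (hy : y ≠ 0)
    (h5 : ¬(s(x,y) = s(1,2) ∨ s(x,y) = s(2,3) ∨ s(x,y) = s(3,4) ∨ s(x,y) = s(4,5) ∨ s(x,y) = s(5,6))) :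
    s(x,y) ∉ B1.2 := by
  rintro (h | h)
  · exact not_in_base2 G13 hx hy h
  · simp only [Set.mem_insert_iff, Set.mem_singleton_iff] at h
    exact h5 h

def q1 : G13.Walk 3 12 :=
  .cons (v := 7) (by decide) (.cons (v := 8) (by decide) (.cons (v := 10) (by decide)
    (.cons (v := 11) (by decide) (.cons (v := 12) (by decide) .nil))))

def q2 : G13.Walk 4 12 :=
  .cons (v := 9) (by decide) (.cons (v := 8) (by decide) (.cons (v := 10) (by decide)
    (.cons (v := 11) (by decide) (.cons (v := 12) (by decide) .nil))))

lemma q1_edges : q1.edges = [s(3,7),s(7,8),s(8,10),s(10,11),s(11,12)] := by decide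
lemma q2_edges : q2.edges = [s(4,9),s(9,8),s(8,10),s(10,11),s(11,12)] := by decide

lemma q1_fresh : ∀ e ∈ q1.edges, e ∉ B1.2 := by
  intro e he
  rw [q1_edges] at he
  simp only [List.mem_cons, List.mem_singleton, List.not_mem_nil, or_false] at he
  rcases he with rfl | rfl | rfl | rfl | rfl <;>
    exact not_in_B12 (by decide) (by decide) (by decide)

lemma q2_fresh : ∀ e ∈ q2.edges, e ∉ B1.2 := by
  intro e he
  rw [q2_edges] at he
  simp only [List.mem_cons, List.mem_singleton, List.not_mem_nil, or_false] at he
  rcases he with rfl | rfl | rfl | rfl | rfl <;>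
    exact not_in_B12 (by decide) (by decide) (by decide)

lemma bdry3 : (3 : Fin 13) ∈ wBdry G13 B1 :=
  ⟨Or.inr (by simp), 7, by decide, not_in_B12 (by decide) (by decide) (by decide)⟩

lemma bdry4 : (4 : Fin 13) ∈ wBdry G13 B1 :=
  ⟨Or.inr (by simp), 9, by decide, not_in_B12 (by decide) (by decide) (by decide)⟩

lemma bdry12 : (12 : Fin 13) ∈ wBdry G13 B1 :=
  ⟨Or.inl (Or.inr (by decide : G13.Adj 0 12)), 11, by decide,
    not_in_B12 (by decide) (by decide) (by decide)⟩

lemma q1_path : q1.IsPath := by rw [SimpleGraph.Walk.isPath_def]; decide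
lemma q2_path : q2.IsPath := by rw [SimpleGraph.Walk.isPath_def]; decide

lemma step2 : wAdd G13 5 B1 = (Set.univ, G13.edgeSet) := by
  refine Prod.ext ?_ ?_ <;> apply Set.Subset.antisymm
  · exact fun v _ => Set.mem_univ v
  · intro v _
    have : v = 0 ∨ v = 1 ∨ v = 2 ∨ v = 3 ∨ v = 4 ∨ v = 5 ∨ v = 6 ∨ v = 12 ∨
        (v ∈ q1.support) ∨ (v ∈ q2.support) := by revert v; decide
    rcases this with rfl | rfl | rfl | rfl | rfl | rfl | rfl | rfl | hv | hv
    · exact Or.inl (Or.inl (Or.inl rfl))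
    · exact Or.inl (mem_B1_of_six 1 (by decide))
    · exact Or.inl (mem_B1_of_six 2 (by decide))
    · exact Or.inl (mem_B1_of_six 3 (by decide))
    · exact Or.inl (mem_B1_of_six 4 (by decide))
    · exact Or.inl (mem_B1_of_six 5 (by decide))
    · exact Or.inl (mem_B1_of_six 6 (by decide))
    · exact Or.inl (Or.inl (Or.inr (by decide : G13.Adj 0 12)))
    · exact Or.inr ⟨3, bdry3, 12, bdry12, q1, q1_path, by decide, q1_fresh, hv⟩
    · exact Or.inr ⟨4, bdry4, 12, bdry12, q2, q2_path, by decide, q2_fresh, hv⟩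
  · rintro e (he | ⟨a, ha, b, hb, p, hp, hl, hfr, he⟩)
    · rcases he with ⟨a, ha, rfl⟩ | he
      · exact (SimpleGraph.mem_edgeSet G13).mpr ha
      · simp only [Set.mem_insert_iff, Set.mem_singleton_iff] at he
        rcases he with rfl | rfl | rfl | rfl | rfl <;> exact (SimpleGraph.mem_edgeSet G13).mpr (by decide)
    · exact p.edges_subset_edgeSet he
  · intro e he
    induction e using Sym2.ind with
    | _ x y =>
      have hadj : G13.Adj x y := (SimpleGraph.mem_edgeSet G13).mp he
      have := (by decide : ∀ x y : Fin 13, G13.Adj x y →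
        (s(x,y) = s(0,1) ∨ s(x,y) = s(0,6) ∨ s(x,y) = s(0,12) ∨ s(x,y) = s(1,2) ∨ s(x,y) = s(2,3) ∨
         s(x,y) = s(3,4) ∨ s(x,y) = s(4,5) ∨ s(x,y) = s(5,6) ∨ s(x,y) = s(3,7) ∨ s(x,y) = s(7,8) ∨
         s(x,y) = s(8,10) ∨ s(x,y) = s(10,11) ∨ s(x,y) = s(11,12) ∨ s(x,y) = s(4,9) ∨ s(x,y) = s(9,8)))
        x y hadj
      rcases this with h | h | h | h | h | h | h | h | h | h | h | h | h | h | h <;> rw [h]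
      · exact Or.inl (Or.inl ⟨1, by decide, rfl⟩)
      · exact Or.inl (Or.inl ⟨6, by decide, rfl⟩)
      · exact Or.inl (Or.inl ⟨12, by decide, rfl⟩)
      · exact Or.inl (Or.inr (by simp))
      · exact Or.inl (Or.inr (by simp))
      · exact Or.inl (Or.inr (by simp))
      · exact Or.inl (Or.inr (by simp))
      · exact Or.inl (Or.inr (by simp))
      · exact Or.inr ⟨3, bdry3, 12, bdry12, q1, q1_path, by decide, q1_fresh, by decide⟩
      · exact Or.inr ⟨3, bdry3, 12, bdry12, q1, q1_path, by decide, q1_fresh, by decide⟩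
      · exact Or.inr ⟨3, bdry3, 12, bdry12, q1, q1_path, by decide, q1_fresh, by decide⟩
      · exact Or.inr ⟨3, bdry3, 12, bdry12, q1, q1_path, by decide, q1_fresh, by decide⟩
      · exact Or.inr ⟨3, bdry3, 12, bdry12, q1, q1_path, by decide, q1_fresh, by decide⟩
      · exact Or.inr ⟨4, bdry4, 12, bdry12, q2, q2_path, by decide, q2_fresh, by decide⟩
      · exact Or.inr ⟨4, bdry4, 12, bdry12, q2, q2_path, by decide, q2_fresh, by decide⟩

lemma wzpz_succ' {V : Type} [Fintype V] (G : SimpleGraph V) (x₀ : V) (s : ℕ) :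
    wzpz G x₀ (s + 1) = wSat G (s + 1) (wzpz G x₀ s) := rfl

lemma wzpz_i4 : wzpz G13 0 4 = wzpzBase G13 0 := by
  have h0 : wzpz G13 0 0 = wzpzBase G13 0 := rfl
  have h1 : wzpz G13 0 1 = wzpzBase G13 0 := by
    rw [wzpz_succ', h0]
    exact Function.iterate_fixed (wAdd_Bi_small 1 (by norm_num)) _
  have h2 : wzpz G13 0 2 = wzpzBase G13 0 := by
    rw [wzpz_succ', h1]
    exact Function.iterate_fixed (wAdd_Bi_small 2 (by norm_num)) _
  have h3 : wzpz G13 0 3 = wzpzBase G13 0 := by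
    rw [wzpz_succ', h2]
    exact Function.iterate_fixed (wAdd_Bi_small 3 (by norm_num)) _
  rw [wzpz_succ', h3]
  exact Function.iterate_fixed (wAdd_Bi_small 4 (by norm_num)) _

lemma wzpz_i5 : wzpz G13 0 5 = (Set.univ, G13.edgeSet) := by
  rw [wzpz_succ', wzpz_i4]
  unfold wSat
  rw [Fintype.card_fin]
  rw [show (13*13+13+1 : ℕ) = 181 + 2 from rfl, Function.iterate_add_apply]
  have h2 : (wAdd G13 5)^[2] (wzpzBase G13 0) = (Set.univ, G13.edgeSet) := by
    rw [show (2 : ℕ) = 1 + 1 from rfl, Function.iterate_add_apply]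
    simp only [Function.iterate_one]
    rw [step1, step2]
  rw [h2]
  exact Function.iterate_fixed (wAdd_top G13 5) _

lemma wzpz_j5 : wzpz G13 11 5 = wzpzBase G13 11 := by
  have h0 : wzpz G13 11 0 = wzpzBase G13 11 := rfl
  have h1 : wzpz G13 11 1 = wzpzBase G13 11 := by
    rw [wzpz_succ', h0]; exact Function.iterate_fixed (wAdd_Bj 1 (by norm_num)) _
  have h2 : wzpz G13 11 2 = wzpzBase G13 11 := by
    rw [wzpz_succ', h1]; exact Function.iterate_fixed (wAdd_Bj 2 (by norm_num)) _
  have h3 : wzpz G13 11 3 = wzpzBase G13 11 := by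
    rw [wzpz_succ', h2]; exact Function.iterate_fixed (wAdd_Bj 3 (by norm_num)) _
  have h4 : wzpz G13 11 4 = wzpzBase G13 11 := by
    rw [wzpz_succ', h3]; exact Function.iterate_fixed (wAdd_Bj 4 (by norm_num)) _
  rw [wzpz_succ', h4]; exact Function.iterate_fixed (wAdd_Bj 5 (by norm_num)) _

/-- The WZPZ-neighborhood relation is not symmetric: there is a finite graph with
vertices `i`, `j` such that `j ∈ N^W_5(i)` while `i ∉ N^W_5(j)`. -/
theorem stmt_12 :
    ∃ (V : Type) (_ : Fintype V) (G : SimpleGraph V) (i j : V),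
      j ∈ (wzpz G i 5).1 ∧ i ∉ (wzpz G j 5).1 := by
  refine ⟨Fin 13, inferInstance, G13, 0, 11, ?_, ?_⟩
  · rw [wzpz_i5]; exact Set.mem_univ _
  · rw [wzpz_j5]
    rintro (h | h)
    · exact absurd h (by decide)
    · exact absurd (h : G13.Adj 11 0) (by decide)
end
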